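/- arXiv:math/0601269 — 5 statements merged into one kernel-verified Lean document; each statement's English description precedes it below -/
import Mathlib

section
/- Comparison Lemma. Consider three scalar differential equations ẍ₋ = F₋(x₋), ẍ = F(x, t), ẍ₊ = F₊(x₊) with C¹ right-hand sides satisfying F₋(x) < F(x, t) < F₊(x) < 0 for all x > x_c and all t, where x_c is a fixed constant, and suppose F₋ and F₊ are monotone increasing on (x_c, ∞). Let x₋(t), x(t), x₊(t) be the solutions of the respective equations sharing the 'at rest' initial conditions x₋(0) = x(0) = x₊(0) = x* > x_c and ẋ₋(0) = ẋ(0) = ẋ₊(0) = 0. Then for all times t with x₋(t) ≥ x_c: (1) x₋(t) ≤ x(t) ≤ x₊(t) ≤ x*, with equality only at t = 0; and (2) ẋ₋(t) < ẋ(t) < ẋ₊(t) for t > 0, while ẋ₋(t) > ẋ(t) > ẋ₊(t) for t < 0. -/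
/-!
Along `t > 0`, each difference `x - x₋`, `x₊ - x`, `x* - x₊` starts at rest with positive
acceleration, and its acceleration stays positive as long as the differences already
controlled keep their sign: this is where the ordering of the forces and the monotonicity of
`F₋`, `F₊` enter. A continuous-induction argument on the first time the velocity of a difference
would vanish then makes all three differences and their velocities positive. The hypothesis
`x₋ ≥ x_c` is upgraded to `x₋ > x_c` before the final time, since `x₋` falls from rest under a
nonpositive force and would cross `x_c` with negative velocity. Negative times follow by
reversing time, which preserves the equations and flips the velocities.
-/

open Set Filter Topology

theorem HasDerivAt.eventually_nhdsGT_lt_of_deriv_pos {f : ℝ → ℝ} {f' a : ℝ}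
    (hf : HasDerivAt f f' a) (hf' : 0 < f') : ∀ᶠ u in 𝓝[>] a, f a < f u := by
  have hslope : Tendsto (slope f a) (𝓝[>] a) (𝓝 f') :=
    (hasDerivAt_iff_tendsto_slope.1 hf).mono_left (nhdsGT_le_nhdsNE a)
  filter_upwards [hslope.eventually (lt_mem_nhds hf'), self_mem_nhdsWithin] with u hpos hau
  rw [slope_def_field] at hpos
  exact sub_pos.1 ((div_pos_iff_of_pos_right (sub_pos.2 hau)).1 hpos)

theorem HasDerivAt.eventually_nhdsGT_lt_of_deriv_neg {f : ℝ → ℝ} {f' a : ℝ}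
    (hf : HasDerivAt f f' a) (hf' : f' < 0) : ∀ᶠ u in 𝓝[>] a, f u < f a := by
  filter_upwards [hf.neg.eventually_nhdsGT_lt_of_deriv_pos (neg_pos.2 hf')] with u hu
  exact neg_lt_neg_iff.1 hu

theorem lt_of_hasDerivAt_of_pos_on_Ioo {f f' : ℝ → ℝ} {a b : ℝ} (hab : a < b)
    (hf : ∀ s, HasDerivAt f (f' s) s) (hpos : ∀ s ∈ Ioo a b, 0 < f' s) : f a < f b := by
  have hcont : Continuous f := continuous_iff_continuousAt.2 fun s => (hf s).continuousAt
  refine strictMonoOn_of_hasDerivWithinAt_pos (convex_Icc a b) hcont.continuousOn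
    (fun s _ => (hf s).hasDerivWithinAt) (by simpa only [interior_Icc] using hpos)
    (left_mem_Icc.2 hab.le) (right_mem_Icc.2 hab.le) hab

theorem pos_on_Ioc_of_pos_on_Ioo_imp {φ : ℝ → ℝ} {a b : ℝ} (hφ : Continuous φ)
    (hstart : ∀ᶠ s in 𝓝[>] a, 0 < φ s)
    (hstep : ∀ s ∈ Ioc a b, (∀ u ∈ Ioo a s, 0 < φ u) → 0 < φ s) :
    ∀ s ∈ Ioc a b, 0 < φ s := by
  by_contra! hbad
  -- At the first failure time `sInf S`, `hstep` gives `φ > 0`, which continuity extends past it.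
  set S := {s ∈ Ioc a b | φ s ≤ 0}
  have hS : S.Nonempty := hbad
  have hSbdd : BddBelow S := ⟨a, fun s hs => hs.1.1.le⟩
  obtain ⟨ε, hε, hφε⟩ := mem_nhdsGT_iff_exists_Ioo_subset.1 hstart
  have hεm : ε ≤ sInf S := le_csInf hS fun s hs => not_lt.1 fun hsε =>
    (hφε ⟨hs.1.1, hsε⟩ : 0 < φ s).not_ge hs.2
  obtain ⟨s, hsS⟩ := hS
  have hm : sInf S ∈ Ioc a b := ⟨(mem_Ioi.1 hε).trans_le hεm, (csInf_le hSbdd hsS).trans hsS.1.2⟩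
  have hφm : 0 < φ (sInf S) := hstep _ hm fun u hu =>
    not_le.1 fun hφu => (csInf_le hSbdd ⟨⟨hu.1, hu.2.le.trans hm.2⟩, hφu⟩).not_gt hu.2
  obtain ⟨δ, hδ, hball⟩ := Metric.eventually_nhds_iff.1
    (continuous_const.continuousAt.eventually_lt hφ.continuousAt hφm)
  obtain ⟨r, hrS, hr⟩ := exists_lt_of_csInf_lt ⟨s, hsS⟩ (lt_add_of_pos_right (sInf S) hδ)
  have hmr : sInf S ≤ r := csInf_le hSbdd hrS
  refine (hball ?_ : 0 < φ r).not_ge hrS.2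
  rw [Real.dist_eq, abs_of_nonneg (sub_nonneg.2 hmr)]
  linarith

theorem pos_and_deriv_pos_of_accel_pos_while_nonneg {g dg ddg : ℝ → ℝ} {a T : ℝ}
    (hg : ∀ s, HasDerivAt g (dg s) s) (hdg : ∀ s, HasDerivAt dg (ddg s) s)
    (hg0 : g a = 0) (hdg0 : dg a = 0) (h0 : 0 < ddg a)
    (haccel : ∀ s ∈ Ioo a T, (∀ u ∈ Icc a s, 0 ≤ g u) → 0 < ddg s) :
    ∀ s ∈ Ioc a T, 0 < g s ∧ 0 < dg s := by
  have g_pos : ∀ s, a < s → (∀ u ∈ Ioo a s, 0 < dg u) → 0 < g s := fun s hs hpos =>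
    hg0 ▸ lt_of_hasDerivAt_of_pos_on_Ioo hs hg hpos
  have dg_pos : ∀ s ∈ Ioc a T, 0 < dg s := by
    refine pos_on_Ioc_of_pos_on_Ioo_imp
      (continuous_iff_continuousAt.2 fun s => (hdg s).continuousAt)
      (hdg0 ▸ (hdg a).eventually_nhdsGT_lt_of_deriv_pos h0) fun s hs hpos => ?_
    have g_nonneg : ∀ u ∈ Icc a s, 0 ≤ g u := by
      intro u hu
      rcases hu.1.eq_or_lt with rfl | hau
      · exact hg0.ge
      · exact (g_pos u hau fun r hr => hpos r ⟨hr.1, hr.2.trans_le hu.2⟩).le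
    exact hdg0 ▸ lt_of_hasDerivAt_of_pos_on_Ioo hs.1 hdg fun u hu =>
      haccel u ⟨hu.1, hu.2.trans_le hs.2⟩ fun r hr => g_nonneg r ⟨hr.1, hr.2.trans hu.2.le⟩
  exact fun s hs => ⟨g_pos s hs.1 fun u hu => dg_pos u ⟨hu.1, hu.2.le.trans hs.2⟩, dg_pos s hs⟩

theorem gt_on_Ico_of_fall_from_rest {G : ℝ → ℝ} {xc t : ℝ} {y w : ℝ → ℝ}
    (hG : Continuous G) (hGneg : ∀ z, xc < z → G z < 0)
    (hy : ∀ s, HasDerivAt y (w s) s) (hw : ∀ s, HasDerivAt w (G (y s)) s)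
    (hy0 : xc < y 0) (hw0 : w 0 = 0) (hxc : ∀ s ∈ Icc 0 t, xc ≤ y s) :
    ∀ s ∈ Ico 0 t, xc < y s := by
  have hGnonpos : Ici xc ⊆ {z | G z ≤ 0} := closure_Ioi xc ▸
    closure_minimal (fun z hz => (hGneg z hz).le) (isClosed_le hG continuous_const)
  have hw_anti : AntitoneOn w (Icc 0 t) :=
    antitoneOn_of_hasDerivWithinAt_nonpos (convex_Icc 0 t)
      (continuous_iff_continuousAt.2 fun s => (hw s).continuousAt).continuousOn
      (fun s _ => (hw s).hasDerivWithinAt)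
      fun s hs => hGnonpos (hxc s (interior_subset hs))
  intro s hs
  by_contra! hys
  have hs0 : 0 < s := hs.1.lt_of_ne (by rintro rfl; linarith)
  obtain ⟨u, hwu, hu⟩ := (((hw 0).eventually_nhdsGT_lt_of_deriv_neg (hGneg _ hy0)).and
    (Ioo_mem_nhdsGT hs0)).exists
  have hws : w s < 0 :=
    (hw_anti ⟨hu.1.le, hu.2.le.trans hs.2.le⟩ ⟨hs.1, hs.2.le⟩ hu.2.le).trans_lt (hw0 ▸ hwu)
  obtain ⟨r, hyr, hr⟩ := (((hy s).eventually_nhdsGT_lt_of_deriv_neg hws).and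
    (Ioo_mem_nhdsGT hs.2)).exists
  linarith [hxc r ⟨hs.1.trans hr.1.le, hr.2.le⟩]

theorem hasDerivAt_comp_neg_of_forall {f f' : ℝ → ℝ} (hf : ∀ t, HasDerivAt f (f' t) t)
    (s : ℝ) : HasDerivAt (fun u => f (-u)) (-f' (-s)) s := by
  simpa [Function.comp_def] using (hf (-s)).comp s (hasDerivAt_neg s)

theorem hasDerivAt_neg_comp_neg_of_forall {f f' : ℝ → ℝ} (hf : ∀ t, HasDerivAt f (f' t) t)
    (s : ℝ) : HasDerivAt (fun u => -f (-u)) (f' (-s)) s := by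
  simpa using (hasDerivAt_comp_neg_of_forall hf s).fun_neg

theorem comparison_forward {xc xstar : ℝ} (hx : xc < xstar)
    {Fm Fp : ℝ → ℝ} {F : ℝ → ℝ → ℝ} (hFm : Continuous Fm)
    (horder : ∀ x t : ℝ, xc < x → Fm x < F x t ∧ F x t < Fp x ∧ Fp x < 0)
    (hFmmono : MonotoneOn Fm (Ioi xc)) (hFpmono : MonotoneOn Fp (Ioi xc))
    {xm x xp vm v vp : ℝ → ℝ}
    (hxm : ∀ t, HasDerivAt xm (vm t) t) (hvm : ∀ t, HasDerivAt vm (Fm (xm t)) t)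
    (hxx : ∀ t, HasDerivAt x (v t) t) (hv : ∀ t, HasDerivAt v (F (x t) t) t)
    (hxp : ∀ t, HasDerivAt xp (vp t) t) (hvp : ∀ t, HasDerivAt vp (Fp (xp t)) t)
    (hm0 : xm 0 = xstar) (h00 : x 0 = xstar) (hp0 : xp 0 = xstar)
    (hvm0 : vm 0 = 0) (hv0 : v 0 = 0) (hvp0 : vp 0 = 0)
    {t : ℝ} (ht : 0 < t) (hxc : ∀ s ∈ Icc 0 t, xc ≤ xm s) :
    (xm t < x t ∧ x t < xp t ∧ xp t < xstar) ∧ vm t < v t ∧ v t < vp t := by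
  have hxm_gt := gt_on_Ico_of_fall_from_rest hFm
    (fun z hz => ((horder z 0 hz).1.trans (horder z 0 hz).2.1).trans (horder z 0 hz).2.2)
    hxm hvm (hm0 ▸ hx) hvm0 hxc
  have hstar := horder xstar 0 hx
  have hx_xm := pos_and_deriv_pos_of_accel_pos_while_nonneg (a := 0) (T := t)
    (g := fun s => x s - xm s) (fun s => (hxx s).sub (hxm s)) (fun s => (hv s).sub (hvm s))
    (by simp [h00, hm0]) (by simp [hv0, hvm0]) (by simpa [h00, hm0] using hstar.1)
    fun s hs hge => by
      have hm : xc < xm s := hxm_gt s ⟨hs.1.le, hs.2⟩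
      have hle : xm s ≤ x s := sub_nonneg.1 (hge s (right_mem_Icc.2 hs.1.le))
      linarith [hFmmono hm (hm.trans_le hle) hle, (horder (x s) s (hm.trans_le hle)).1]
  have hx_gt : ∀ s ∈ Ioo 0 t, xc < x s := fun s hs =>
    (hxc s ⟨hs.1.le, hs.2.le⟩).trans_lt (sub_pos.1 (hx_xm s ⟨hs.1, hs.2.le⟩).1)
  have hxp_x := pos_and_deriv_pos_of_accel_pos_while_nonneg (a := 0) (T := t)
    (g := fun s => xp s - x s) (fun s => (hxp s).sub (hxx s)) (fun s => (hvp s).sub (hv s))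
    (by simp [hp0, h00]) (by simp [hvp0, hv0]) (by simpa [hp0, h00] using hstar.2.1)
    fun s hs hge => by
      have hle : x s ≤ xp s := sub_nonneg.1 (hge s (right_mem_Icc.2 hs.1.le))
      linarith [hFpmono (hx_gt s hs) ((hx_gt s hs).trans_le hle) hle,
        (horder (x s) s (hx_gt s hs)).2.1]
  have hstar_xp := pos_and_deriv_pos_of_accel_pos_while_nonneg (a := 0) (T := t)
    (g := fun s => xstar - xp s) (ddg := fun s => -Fp (xp s))
    (fun s => (hxp s).const_sub xstar) (fun s => (hvp s).neg)
    (by simp [hp0]) (by simp [hvp0]) (by simpa [hp0] using hstar.2.2)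
    fun s hs _ => by
      linarith [(horder (xp s) s
        ((hx_gt s hs).trans (sub_pos.1 (hxp_x s ⟨hs.1, hs.2.le⟩).1))).2.2]
  have h1 := hx_xm t ⟨ht, le_rfl⟩
  have h2 := hxp_x t ⟨ht, le_rfl⟩
  have h3 := hstar_xp t ⟨ht, le_rfl⟩
  simp only [sub_pos] at h1 h2 h3
  exact ⟨⟨h1.1, h2.1, h3.1⟩, h1.2, h2.2⟩

theorem comparison_lemma_general
    (xc xstar : ℝ) (hx : xc < xstar)
    (Fm Fp : ℝ → ℝ) (F : ℝ → ℝ → ℝ)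
    (hFm : ContDiff ℝ 1 Fm)
    (horder : ∀ x t : ℝ, xc < x → Fm x < F x t ∧ F x t < Fp x ∧ Fp x < 0)
    (hFmmono : MonotoneOn Fm (Ioi xc)) (hFpmono : MonotoneOn Fp (Ioi xc))
    (xm x xp vm v vp : ℝ → ℝ)
    -- the three solutions and their first and second derivatives
    (hxm : ∀ t : ℝ, HasDerivAt xm (vm t) t) (hvm : ∀ t : ℝ, HasDerivAt vm (Fm (xm t)) t)
    (hxx : ∀ t : ℝ, HasDerivAt x (v t) t) (hv : ∀ t : ℝ, HasDerivAt v (F (x t) t) t)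
    (hxp : ∀ t : ℝ, HasDerivAt xp (vp t) t) (hvp : ∀ t : ℝ, HasDerivAt vp (Fp (xp t)) t)
    -- shared at-rest initial conditions
    (hm0 : xm 0 = xstar) (h00 : x 0 = xstar) (hp0 : xp 0 = xstar)
    (hvm0 : vm 0 = 0) (hv0 : v 0 = 0) (hvp0 : vp 0 = 0) :
    ∀ t : ℝ, (∀ s ∈ uIcc 0 t, xc ≤ xm s) →
      (xm t ≤ x t ∧ x t ≤ xp t ∧ xp t ≤ xstar) ∧
      (t ≠ 0 → xm t < x t ∧ x t < xp t ∧ xp t < xstar) ∧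
      (0 < t → vm t < v t ∧ v t < vp t) ∧
      (t < 0 → v t < vm t ∧ vp t < v t) := by
  intro t hxc
  rcases lt_trichotomy t 0 with ht | rfl | ht
  · obtain ⟨⟨h1, h2, h3⟩, h4, h5⟩ := comparison_forward hx hFm.continuous
      (fun y s hy => horder y (-s) hy) hFmmono hFpmono
      (hasDerivAt_comp_neg_of_forall hxm) (hasDerivAt_neg_comp_neg_of_forall hvm)
      (hasDerivAt_comp_neg_of_forall hxx) (hasDerivAt_neg_comp_neg_of_forall hv)
      (hasDerivAt_comp_neg_of_forall hxp) (hasDerivAt_neg_comp_neg_of_forall hvp)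
      (by simpa using hm0) (by simpa using h00) (by simpa using hp0)
      (by simpa using hvm0) (by simpa using hv0) (by simpa using hvp0) (neg_pos.2 ht)
      (fun s hs => hxc (-s) (by rw [uIcc_of_ge ht.le]; constructor <;> linarith [hs.1, hs.2]))
    simp only [neg_neg, neg_lt_neg_iff] at h1 h2 h3 h4 h5
    exact ⟨⟨h1.le, h2.le, h3.le⟩, fun _ => ⟨h1, h2, h3⟩, fun h => absurd h ht.not_gt,
      fun _ => ⟨h4, h5⟩⟩
  · simp [hm0, h00, hp0]
  · obtain ⟨⟨h1, h2, h3⟩, h4⟩ := comparison_forward hx hFm.continuous horder hFmmono hFpmono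
      hxm hvm hxx hv hxp hvp hm0 h00 hp0 hvm0 hv0 hvp0 ht (uIcc_of_le ht.le ▸ hxc)
    exact ⟨⟨h1.le, h2.le, h3.le⟩, fun _ => ⟨h1, h2, h3⟩, fun _ => h4,
      fun h => absurd h ht.not_gt⟩

/-- **Comparison Lemma.** Given three scalar second-order ODEs `ẍ₋ = F₋(x₋)`, `ẍ = F(x,t)`,
`ẍ₊ = F₊(x₊)` with `C¹` right-hand sides satisfying `F₋(x) < F(x,t) < F₊(x) < 0` for `x > x_c`,
with `F₋`, `F₊` monotone increasing on `(x_c, ∞)`, and solutions sharing the at-rest initial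
conditions `x₋(0) = x(0) = x₊(0) = x* > x_c`, `ẋ₋(0) = ẋ(0) = ẋ₊(0) = 0`, then as long as
`x₋ ≥ x_c`: (1) `x₋ ≤ x ≤ x₊ ≤ x*` with equality only at `t = 0`, and (2) `ẋ₋ < ẋ < ẋ₊` for
`t > 0` while `ẋ₋ > ẋ > ẋ₊` for `t < 0`. -/
theorem comparison_lemma
    (xc xstar : ℝ) (hx : xc < xstar)
    (Fm Fp : ℝ → ℝ) (F : ℝ → ℝ → ℝ)
    (hFm : ContDiff ℝ 1 Fm) (hFp : ContDiff ℝ 1 Fp)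
    (hF : ContDiff ℝ 1 (fun p : ℝ × ℝ => F p.1 p.2))
    (horder : ∀ x t : ℝ, xc < x → Fm x < F x t ∧ F x t < Fp x ∧ Fp x < 0)
    (hFmmono : MonotoneOn Fm (Ioi xc)) (hFpmono : MonotoneOn Fp (Ioi xc))
    (xm x xp vm v vp : ℝ → ℝ)
    -- the three solutions and their first and second derivatives
    (hxm : ∀ t : ℝ, HasDerivAt xm (vm t) t) (hvm : ∀ t : ℝ, HasDerivAt vm (Fm (xm t)) t)
    (hxx : ∀ t : ℝ, HasDerivAt x (v t) t) (hv : ∀ t : ℝ, HasDerivAt v (F (x t) t) t)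
    (hxp : ∀ t : ℝ, HasDerivAt xp (vp t) t) (hvp : ∀ t : ℝ, HasDerivAt vp (Fp (xp t)) t)
    -- shared at-rest initial conditions
    (hm0 : xm 0 = xstar) (h00 : x 0 = xstar) (hp0 : xp 0 = xstar)
    (hvm0 : vm 0 = 0) (hv0 : v 0 = 0) (hvp0 : vp 0 = 0) :
    ∀ t : ℝ, (∀ s ∈ uIcc 0 t, xc ≤ xm s) →
      (xm t ≤ x t ∧ x t ≤ xp t ∧ xp t ≤ xstar) ∧
      (t ≠ 0 → xm t < x t ∧ x t < xp t ∧ xp t < xstar) ∧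
      (0 < t → vm t < v t ∧ v t < vp t) ∧
      (t < 0 → v t < vm t ∧ vp t < v t) :=
  comparison_lemma_general xc xstar hx Fm Fp F hFm horder hFmmono hFpmono xm x xp vm v vp hxm hvm
    hxx hv hxp hvp hm0 h00 hp0 hvm0 hv0 hvp0
end

section
/- Escape case: let ρ(t) = ‖ξ(t)‖ be the length of the long Jacobi vector of a collision-free solution of the three-body problem defined on [0,∞) with total energy H = −h < 0 and total angular momentum norm ≤ j, along which the pair (1,2) realizes the minimal intermass distance for all large t, and suppose ρ(t) → +∞ as t → ∞. Then there exists T such that ρ̇(t) > 0 for all t ≥ T, ρ̇ is monotonically decreasing on [T, ∞), and the limit ν_∞ = lim_{t→∞} ρ̇(t) exists and satisfies ν_∞ ≥ 0. -/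
/-!
As `(1,2)` is the closest pair, the potential is at most `S / r₁₂` with `S = m₁m₂ + m₁m₃ + m₂m₃`;
at energy `-h < 0` this gives `r₁₂ ≤ S / h` and bounds the pair's kinetic energy by `2S / r₁₂`,
hence its relative angular momentum. Splitting the total angular momentum along Jacobi
coordinates, whose centre-of-mass part is constant by conservation of linear momentum, then
bounds `ξ × ξ̇`. By Newton's third law `ξ̈ = (M / (m₁ + m₂)) ẍ₃`, and once `ρ ≥ 2 r₁₂` the pull of
the pair on body 3 gives `⟪ξ, ξ̈⟫ ≤ -(4M/27) / ρ`. Hence `ρ̈ = (⟪ξ, ξ̈⟫ ρ² + ‖ξ × ξ̇‖²) / ρ³ < 0`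
for large `ρ`: `ρ̇` eventually decreases strictly, it stays positive since otherwise `ρ` would
decrease from then on, and it converges by monotonicity.
-/

open scoped RealInnerProductSpace
open Set Filter

/-- The cross product on `ℝ³ = EuclideanSpace ℝ (Fin 3)`. -/
noncomputable def cross3 (a b : EuclideanSpace ℝ (Fin 3)) : EuclideanSpace ℝ (Fin 3) :=
  WithLp.toLp 2 ![a 1 * b 2 - a 2 * b 1, a 2 * b 0 - a 0 * b 2, a 0 * b 1 - a 1 * b 0]

local notation "ℝ³" => EuclideanSpace ℝ (Fin 3)

section CrossProduct

lemma cross3_eq_crossProduct (a b : ℝ³) :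
    cross3 a b = WithLp.toLp 2 (crossProduct (WithLp.ofLp a) (WithLp.ofLp b)) := rfl

noncomputable def cross3ₗ : ℝ³ →ₗ[ℝ] ℝ³ →ₗ[ℝ] ℝ³ :=
  (crossProduct.compl₁₂ (WithLp.linearEquiv 2 ℝ (Fin 3 → ℝ)).toLinearMap
    (WithLp.linearEquiv 2 ℝ (Fin 3 → ℝ)).toLinearMap).compr₂
    (WithLp.linearEquiv 2 ℝ (Fin 3 → ℝ)).symm.toLinearMap

lemma cross3ₗ_apply (a b : ℝ³) : cross3ₗ a b = cross3 a b := rfl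

lemma cross3_self (a : ℝ³) : cross3 a a = 0 := by
  rw [cross3_eq_crossProduct, cross_self]
  rfl

lemma cross3_add_smul_self (a b : ℝ³) (s : ℝ) : cross3 (a + s • b) b = cross3 a b := by
  rw [← cross3ₗ_apply, map_add, map_smul, LinearMap.add_apply, LinearMap.smul_apply, cross3ₗ_apply,
    cross3ₗ_apply, cross3_self, smul_zero, add_zero]

lemma norm_cross3_sq (a b : ℝ³) : ‖cross3 a b‖ ^ 2 = ‖a‖ ^ 2 * ‖b‖ ^ 2 - ⟪a, b⟫ ^ 2 := by
  simp only [← real_inner_self_eq_norm_sq, EuclideanSpace.inner_eq_star_dotProduct, star_trivial,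
    cross3_eq_crossProduct, cross_dot_cross, dotProduct_comm (WithLp.ofLp a)]
  ring

lemma norm_cross3_le (a b : ℝ³) : ‖cross3 a b‖ ≤ ‖a‖ * ‖b‖ := by
  refine (pow_le_pow_iff_left₀ (norm_nonneg _) (by positivity) two_ne_zero).1 ?_
  rw [norm_cross3_sq, mul_pow]
  linarith [sq_nonneg ⟪a, b⟫]

end CrossProduct

section JacobiCoordinates

variable {K V W U : Type*} [Field K] [AddCommGroup V] [Module K V] [AddCommGroup W] [Module K W]
  [AddCommGroup U] [Module K U]

def jacobiVec (m₁ m₂ : K) (a₁ a₂ a₃ : V) : V := a₃ - (m₁ + m₂)⁻¹ • (m₁ • a₁ + m₂ • a₂)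

variable {m₁ m₂ m₃ : K}

lemma jacobiVec_eq_smul_of_sum_eq_zero {a₁ a₂ a₃ : V} (h₁₂ : m₁ + m₂ ≠ 0)
    (h : m₁ • a₁ + m₂ • a₂ + m₃ • a₃ = 0) :
    jacobiVec m₁ m₂ a₁ a₂ a₃ = ((m₁ + m₂ + m₃) / (m₁ + m₂)) • a₃ := by
  rw [jacobiVec, eq_neg_of_add_eq_zero_left h]
  match_scalars
  field_simp
  ring

lemma sub_eq_smul_sub_sub_jacobiVec (h₁₂ : m₁ + m₂ ≠ 0) (a₁ a₂ a₃ : V) :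
    a₁ - a₃ = (m₂ / (m₁ + m₂)) • (a₁ - a₂) - jacobiVec m₁ m₂ a₁ a₂ a₃ := by
  rw [jacobiVec]
  match_scalars <;> field_simp <;> ring

lemma sub_eq_smul_sub_sub_jacobiVec' (h₁₂ : m₁ + m₂ ≠ 0) (a₁ a₂ a₃ : V) :
    a₂ - a₃ = (m₁ / (m₁ + m₂)) • (a₂ - a₁) - jacobiVec m₁ m₂ a₁ a₂ a₃ := by
  rw [jacobiVec]
  match_scalars <;> field_simp <;> ring

lemma LinearMap.jacobi_decomposition (B : V →ₗ[K] W →ₗ[K] U) (h₁₂ : m₁ + m₂ ≠ 0)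
    (hM : m₁ + m₂ + m₃ ≠ 0) (a₁ a₂ a₃ : V) (b₁ b₂ b₃ : W) :
    m₁ • B a₁ b₁ + m₂ • B a₂ b₂ + m₃ • B a₃ b₃ =
      (m₁ + m₂ + m₃)⁻¹ • B (m₁ • a₁ + m₂ • a₂ + m₃ • a₃) (m₁ • b₁ + m₂ • b₂ + m₃ • b₃) +
      (m₃ * (m₁ + m₂) / (m₁ + m₂ + m₃)) • B (jacobiVec m₁ m₂ a₁ a₂ a₃) (jacobiVec m₁ m₂ b₁ b₂ b₃) +
      (m₁ * m₂ / (m₁ + m₂)) • B (a₂ - a₁) (b₂ - b₁) := by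
  simp only [jacobiVec, map_add, map_sub, map_smul, LinearMap.add_apply, LinearMap.sub_apply,
    LinearMap.smul_apply, smul_add, smul_sub, smul_smul]
  match_scalars <;> field_simp <;> ring

end JacobiCoordinates

section Calculus

variable {E : Type*} [NormedAddCommGroup E] [InnerProductSpace ℝ E] {f g : ℝ → E} {f' g' : E}
  {s : Set ℝ} {t : ℝ}

theorem HasDerivWithinAt.norm (hf : HasDerivWithinAt f f' s t) (h0 : f t ≠ 0) :
    HasDerivWithinAt (fun t => ‖f t‖) (⟪f t, f'⟫ / ‖f t‖) s t := by
  have hsq : ‖f t‖ ^ 2 ≠ 0 := by positivity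
  have := (hf.norm_sq).sqrt hsq
  simp only [Real.sqrt_sq (norm_nonneg _)] at this
  refine this.congr_deriv ?_
  field_simp

theorem HasDerivWithinAt.inner_div_norm (hf : HasDerivWithinAt f (g t) s t)
    (hg : HasDerivWithinAt g g' s t) (h0 : f t ≠ 0) :
    HasDerivWithinAt (fun t => ⟪f t, g t⟫ / ‖f t‖)
      ((⟪f t, g'⟫ * ‖f t‖ ^ 2 + (‖f t‖ ^ 2 * ‖g t‖ ^ 2 - ⟪f t, g t⟫ ^ 2)) / ‖f t‖ ^ 3) s t := by
  have hn : ‖f t‖ ≠ 0 := norm_ne_zero_iff.2 h0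
  refine ((hf.inner ℝ hg).div (hf.norm h0) hn).congr_deriv ?_
  rw [real_inner_self_eq_norm_sq]
  field_simp
  ring

lemma eq_of_hasDerivWithinAt_Ici_zero {F : Type*} [NormedAddCommGroup F] [NormedSpace ℝ F]
    {f : ℝ → F} {a : ℝ} (hf : ∀ t ∈ Ici a, HasDerivWithinAt f 0 (Ici a) t) :
    ∀ t ∈ Ici a, f t = f a := fun t ht =>
  constant_of_has_deriv_right_zero
    (fun s hs => (hf s hs.1).continuousWithinAt.mono Icc_subset_Ici_self)
    (fun s hs => (hf s hs.1).mono (Ici_subset_Ici.2 hs.1)) t ⟨ht, le_rfl⟩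

end Calculus

section Monotonicity

variable {f f' : ℝ → ℝ} {a : ℝ}

lemma strictAntiOn_Ici_of_hasDerivWithinAt_neg
    (hf : ∀ t ≥ a, HasDerivWithinAt f (f' t) (Ici a) t) (hf' : ∀ t > a, f' t < 0) :
    StrictAntiOn f (Ici a) :=
  strictAntiOn_of_hasDerivWithinAt_neg (convex_Ici a) (fun t ht => (hf t ht).continuousWithinAt)
    (fun t ht => by
      rw [interior_Ici] at ht ⊢
      exact (hf t (le_of_lt ht)).mono Ioi_subset_Ici_self)
    (fun t ht => hf' t (by rwa [interior_Ici] at ht))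

lemma antitoneOn_Ici_of_hasDerivWithinAt_nonpos
    (hf : ∀ t ≥ a, HasDerivWithinAt f (f' t) (Ici a) t) (hf' : ∀ t > a, f' t ≤ 0) :
    AntitoneOn f (Ici a) :=
  antitoneOn_of_hasDerivWithinAt_nonpos (convex_Ici a) (fun t ht => (hf t ht).continuousWithinAt)
    (fun t ht => by
      rw [interior_Ici] at ht ⊢
      exact (hf t (le_of_lt ht)).mono Ioi_subset_Ici_self)
    (fun t ht => hf' t (by rwa [interior_Ici] at ht))

lemma pos_of_hasDerivWithinAt_of_antitoneOn {ρ ν : ℝ → ℝ}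
    (hρ : ∀ t ≥ a, HasDerivWithinAt ρ (ν t) (Ici a) t) (hν : AntitoneOn ν (Ici a))
    (hρ_top : Tendsto ρ atTop atTop) : ∀ t ≥ a, 0 < ν t := by
  intro t ht
  by_contra! hνt
  have hanti : AntitoneOn ρ (Ici t) :=
    antitoneOn_Ici_of_hasDerivWithinAt_nonpos
      (fun s hs => (hρ s (ht.trans hs)).mono (Ici_subset_Ici.2 ht))
      (fun s hs => (hν ht (ht.trans hs.le) hs.le).trans hνt)
  obtain ⟨s, hs, hts⟩ := ((hρ_top.eventually_gt_atTop (ρ t)).and (eventually_ge_atTop t)).exists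
  exact (hanti self_mem_Ici hts hts).not_gt hs

lemma AntitoneOn.exists_tendsto_atTop_of_nonneg {ν : ℝ → ℝ} (hν : AntitoneOn ν (Ici a))
    (h0 : ∀ t ≥ a, 0 ≤ ν t) : ∃ l, 0 ≤ l ∧ Tendsto ν atTop (nhds l) := by
  have hmono : Antitone fun t => ν (max t a) := fun s t hst =>
    hν (le_max_right s a) (le_max_right t a) (max_le_max_right a hst)
  refine ⟨⨅ t, ν (max t a), le_ciInf fun t => h0 _ (le_max_right t a), ?_⟩
  refine (tendsto_atTop_ciInf hmono ⟨0, ?_⟩).congr' ?_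
  · rintro _ ⟨t, rfl⟩
    exact h0 _ (le_max_right t a)
  · filter_upwards [eventually_ge_atTop a] with t ht
    rw [max_eq_left ht]

end Monotonicity

section Gravity

variable {E : Type*} [NormedAddCommGroup E]

noncomputable def gravAccel [NormedSpace ℝ E] (m : ℝ) (r : E) : E := (m / ‖r‖ ^ 3) • r

lemma smul_gravAccel_add_smul_gravAccel_eq_zero [NormedSpace ℝ E] (m m' : ℝ) (x y : E) :
    m • gravAccel m' (y - x) + m' • gravAccel m (x - y) = 0 := by
  rw [gravAccel, gravAccel, norm_sub_rev x y]
  module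

lemma smul_gravAccel_sum_eq_zero [NormedSpace ℝ E] (m₁ m₂ m₃ : ℝ) (x₁ x₂ x₃ : E) :
    m₁ • (gravAccel m₂ (x₂ - x₁) + gravAccel m₃ (x₃ - x₁)) +
      m₂ • (gravAccel m₁ (x₁ - x₂) + gravAccel m₃ (x₃ - x₂)) +
      m₃ • (gravAccel m₁ (x₁ - x₃) + gravAccel m₂ (x₂ - x₃)) = 0 := by
  have h₁₂ := smul_gravAccel_add_smul_gravAccel_eq_zero m₁ m₂ x₁ x₂
  have h₁₃ := smul_gravAccel_add_smul_gravAccel_eq_zero m₁ m₃ x₁ x₃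
  have h₂₃ := smul_gravAccel_add_smul_gravAccel_eq_zero m₂ m₃ x₂ x₃
  linear_combination (norm := module) h₁₂ + h₁₃ + h₂₃

variable [InnerProductSpace ℝ E]

/-- The displacement `y = c • r - ξ` has `⟪ξ, y⟫ ≤ -‖ξ‖²/2` and `‖y‖ ≤ 3‖ξ‖/2`, whence the
constant `4/27 = (1/2) / (3/2)³`. -/
lemma inner_gravAccel_le {m c d : ℝ} {ξ r : E} (hm : 0 ≤ m) (hc₀ : 0 ≤ c) (hc₁ : c ≤ 1)
    (hr : ‖r‖ ≤ d) (hξ : 2 * d ≤ ‖ξ‖) :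
    ⟪ξ, gravAccel m (c • r - ξ)⟫ ≤ -(4 * m / (27 * ‖ξ‖)) := by
  rcases (norm_nonneg ξ).eq_or_lt with h0 | hρ
  · simp [norm_eq_zero.1 h0.symm]
  set ρ := ‖ξ‖
  have hcr : ‖c • r‖ ≤ d := by
    rw [norm_smul, Real.norm_of_nonneg hc₀]
    nlinarith [norm_nonneg r]
  have hinner : ⟪ξ, c • r - ξ⟫ ≤ -(ρ ^ 2 / 2) := by
    rw [inner_sub_right, real_inner_self_eq_norm_sq]
    nlinarith [real_inner_le_norm ξ (c • r)]
  have hnorm : ‖c • r - ξ‖ ≤ 3 / 2 * ρ := by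
    linarith [norm_sub_le (c • r) ξ]
  have hpos : 0 < ‖c • r - ξ‖ := by
    nlinarith [abs_real_inner_le_norm ξ (c • r - ξ), neg_abs_le ⟪ξ, c • r - ξ⟫]
  rw [gravAccel, real_inner_smul_right]
  calc m / ‖c • r - ξ‖ ^ 3 * ⟪ξ, c • r - ξ⟫ ≤ m / ‖c • r - ξ‖ ^ 3 * -(ρ ^ 2 / 2) :=
        mul_le_mul_of_nonneg_left hinner (by positivity)
    _ ≤ m / (3 / 2 * ρ) ^ 3 * -(ρ ^ 2 / 2) :=
        mul_le_mul_of_nonpos_right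
          (div_le_div_of_nonneg_left hm (by positivity) (pow_le_pow_left₀ hpos.le hnorm 3))
          (by nlinarith)
    _ = -(4 * m / (27 * ρ)) := by field_simp; ring

lemma inner_jacobiVec_accel_le {m₁ m₂ m₃ d : ℝ} {x₁ x₂ x₃ : E} (hm₁ : 0 < m₁) (hm₂ : 0 < m₂)
    (hm₃ : 0 ≤ m₃) (hr : ‖x₁ - x₂‖ ≤ d) (hξ : 2 * d ≤ ‖jacobiVec m₁ m₂ x₁ x₂ x₃‖) :
    ⟪jacobiVec m₁ m₂ x₁ x₂ x₃, ((m₁ + m₂ + m₃) / (m₁ + m₂)) •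
        (gravAccel m₁ (x₁ - x₃) + gravAccel m₂ (x₂ - x₃))⟫ ≤
      -(4 * (m₁ + m₂ + m₃) / 27 / ‖jacobiVec m₁ m₂ x₁ x₂ x₃‖) := by
  have h₁₂ : 0 < m₁ + m₂ := by positivity
  have h₁ := inner_gravAccel_le (m := m₁) (c := m₂ / (m₁ + m₂)) hm₁.le (by positivity)
    (div_le_one_of_le₀ (by linarith) h₁₂.le) hr hξ
  have h₂ := inner_gravAccel_le (m := m₂) (c := m₁ / (m₁ + m₂)) (r := x₂ - x₁) hm₂.le
    (by positivity) (div_le_one_of_le₀ (by linarith) h₁₂.le) (by rwa [norm_sub_rev]) hξ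
  rw [← sub_eq_smul_sub_sub_jacobiVec h₁₂.ne'] at h₁
  rw [← sub_eq_smul_sub_sub_jacobiVec' h₁₂.ne'] at h₂
  rw [real_inner_smul_right, inner_add_right]
  calc _ ≤ (m₁ + m₂ + m₃) / (m₁ + m₂) * (-(4 * m₁ / (27 * ‖jacobiVec m₁ m₂ x₁ x₂ x₃‖)) +
        -(4 * m₂ / (27 * ‖jacobiVec m₁ m₂ x₁ x₂ x₃‖))) :=
        mul_le_mul_of_nonneg_left (add_le_add h₁ h₂) (by positivity)
    _ = _ := by field_simp; ring

end Gravity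

section Energy

variable {E : Type*} [NormedAddCommGroup E] [InnerProductSpace ℝ E]

lemma reducedMass_mul_norm_sub_sq_le {m₁ m₂ : ℝ} (hm : 0 < m₁ + m₂) (a b : E) :
    m₁ * m₂ / (m₁ + m₂) * ‖b - a‖ ^ 2 ≤ m₁ * ‖a‖ ^ 2 + m₂ * ‖b‖ ^ 2 := by
  have key : (m₁ + m₂) * (m₁ * ‖a‖ ^ 2 + m₂ * ‖b‖ ^ 2) - m₁ * m₂ * ‖b - a‖ ^ 2 =
      ‖m₁ • a + m₂ • b‖ ^ 2 := by
    rw [norm_sub_sq_real, norm_add_sq_real, norm_smul, norm_smul, real_inner_smul_left,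
      real_inner_smul_right, mul_pow, mul_pow, Real.norm_eq_abs, Real.norm_eq_abs, sq_abs, sq_abs,
      real_inner_comm]
    ring
  rw [div_mul_eq_mul_div, div_le_iff₀ hm]
  nlinarith [sq_nonneg ‖m₁ • a + m₂ • b‖]

lemma potential_le_of_closest_pair {m₁ m₂ m₃ r₁₂ r₁₃ r₂₃ : ℝ} (hm₁ : 0 ≤ m₁) (hm₂ : 0 ≤ m₂)
    (hm₃ : 0 ≤ m₃) (hr : 0 < r₁₂) (h₁₃ : r₁₂ ≤ r₁₃) (h₂₃ : r₁₂ ≤ r₂₃) :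
    m₁ * m₂ / r₁₂ + m₁ * m₃ / r₁₃ + m₂ * m₃ / r₂₃ ≤ (m₁ * m₂ + m₁ * m₃ + m₂ * m₃) / r₁₂ := by
  rw [add_div, add_div]
  gcongr

lemma closest_pair_bounds {m₁ m₂ m₃ h : ℝ} {x₁ x₂ x₃ v₁ v₂ v₃ : E} (hm₁ : 0 < m₁) (hm₂ : 0 < m₂)
    (hm₃ : 0 ≤ m₃) (hh : 0 < h) (hne : x₁ ≠ x₂)
    (hmin : ‖x₁ - x₂‖ ≤ ‖x₁ - x₃‖ ∧ ‖x₁ - x₂‖ ≤ ‖x₂ - x₃‖)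
    (hH : (1 / 2) * (m₁ * ‖v₁‖ ^ 2 + m₂ * ‖v₂‖ ^ 2 + m₃ * ‖v₃‖ ^ 2) -
      (m₁ * m₂ / ‖x₁ - x₂‖ + m₁ * m₃ / ‖x₁ - x₃‖ + m₂ * m₃ / ‖x₂ - x₃‖) = -h) :
    ‖x₁ - x₂‖ ≤ (m₁ * m₂ + m₁ * m₃ + m₂ * m₃) / h ∧
      ‖x₂ - x₁‖ * ‖v₂ - v₁‖ ≤
        √(2 * (m₁ * m₂ + m₁ * m₃ + m₂ * m₃) ^ 2 / (h * (m₁ * m₂ / (m₁ + m₂)))) := by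
  set S := m₁ * m₂ + m₁ * m₃ + m₂ * m₃
  set μ := m₁ * m₂ / (m₁ + m₂)
  set r := ‖x₁ - x₂‖
  set U := m₁ * m₂ / r + m₁ * m₃ / ‖x₁ - x₃‖ + m₂ * m₃ / ‖x₂ - x₃‖
  have hr : 0 < r := norm_sub_pos_iff.2 hne
  have hUr : U * r ≤ S :=
    (le_div_iff₀ hr).1 (potential_le_of_closest_pair hm₁.le hm₂.le hm₃ hr hmin.1 hmin.2)
  have hkin := reducedMass_mul_norm_sub_sq_le (m₁ := m₁) (m₂ := m₂) (by positivity) v₁ v₂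
  have hv₁₂ : 0 ≤ m₁ * ‖v₁‖ ^ 2 + m₂ * ‖v₂‖ ^ 2 := by positivity
  have hv₃ : 0 ≤ m₃ * ‖v₃‖ ^ 2 := by positivity
  have hhr : h * r ≤ S := (mul_le_mul_of_nonneg_right (by linarith) hr.le).trans hUr
  have hμU : μ * ‖v₂ - v₁‖ ^ 2 ≤ 2 * U := by linarith
  have hμr : μ * ‖v₂ - v₁‖ ^ 2 * r ≤ 2 * S := by
    linarith [mul_le_mul_of_nonneg_right hμU hr.le]
  refine ⟨(le_div_iff₀' hh).2 hhr, Real.le_sqrt_of_sq_le ?_⟩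
  rw [norm_sub_rev, le_div_iff₀ (by positivity)]
  calc (r * ‖v₂ - v₁‖) ^ 2 * (h * μ) = h * r * (μ * ‖v₂ - v₁‖ ^ 2 * r) := by ring
    _ ≤ S * (2 * S) := mul_le_mul hhr hμr (by positivity) (by positivity)
    _ = 2 * S ^ 2 := by ring

end Energy

section ThreeBody

variable {E : Type*} [NormedAddCommGroup E] [NormedSpace ℝ E]

structure IsThreeBodySolution (m₁ m₂ m₃ : ℝ) (x₁ x₂ x₃ v₁ v₂ v₃ : ℝ → E) : Prop where
  hasDerivWithinAt_x₁ : ∀ t ∈ Ici (0:ℝ), HasDerivWithinAt x₁ (v₁ t) (Ici 0) t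
  hasDerivWithinAt_x₂ : ∀ t ∈ Ici (0:ℝ), HasDerivWithinAt x₂ (v₂ t) (Ici 0) t
  hasDerivWithinAt_x₃ : ∀ t ∈ Ici (0:ℝ), HasDerivWithinAt x₃ (v₃ t) (Ici 0) t
  hasDerivWithinAt_v₁ : ∀ t ∈ Ici (0:ℝ), HasDerivWithinAt v₁
    (gravAccel m₂ (x₂ t - x₁ t) + gravAccel m₃ (x₃ t - x₁ t)) (Ici 0) t
  hasDerivWithinAt_v₂ : ∀ t ∈ Ici (0:ℝ), HasDerivWithinAt v₂
    (gravAccel m₁ (x₁ t - x₂ t) + gravAccel m₃ (x₃ t - x₂ t)) (Ici 0) t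
  hasDerivWithinAt_v₃ : ∀ t ∈ Ici (0:ℝ), HasDerivWithinAt v₃
    (gravAccel m₁ (x₁ t - x₃ t) + gravAccel m₂ (x₂ t - x₃ t)) (Ici 0) t

lemma HasDerivWithinAt.jacobiVec {f₁ f₂ f₃ : ℝ → E} {f₁' f₂' f₃' : E} {s : Set ℝ} {t : ℝ}
    (m₁ m₂ : ℝ) (h₁ : HasDerivWithinAt f₁ f₁' s t) (h₂ : HasDerivWithinAt f₂ f₂' s t)
    (h₃ : HasDerivWithinAt f₃ f₃' s t) :
    HasDerivWithinAt (fun t => jacobiVec m₁ m₂ (f₁ t) (f₂ t) (f₃ t))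
      (jacobiVec m₁ m₂ f₁' f₂' f₃') s t :=
  h₃.sub (((h₁.const_smul m₁).add (h₂.const_smul m₂)).const_smul _)

namespace IsThreeBodySolution

variable {m₁ m₂ m₃ : ℝ} {x₁ x₂ x₃ v₁ v₂ v₃ : ℝ → E}

theorem hasDerivWithinAt_jacobiVec_pos (hs : IsThreeBodySolution m₁ m₂ m₃ x₁ x₂ x₃ v₁ v₂ v₃) :
    ∀ t ∈ Ici (0:ℝ), HasDerivWithinAt (fun t => jacobiVec m₁ m₂ (x₁ t) (x₂ t) (x₃ t))
      (jacobiVec m₁ m₂ (v₁ t) (v₂ t) (v₃ t)) (Ici 0) t := fun t ht =>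
  (hs.hasDerivWithinAt_x₁ t ht).jacobiVec m₁ m₂ (hs.hasDerivWithinAt_x₂ t ht)
    (hs.hasDerivWithinAt_x₃ t ht)

theorem hasDerivWithinAt_jacobiVec_vel (hs : IsThreeBodySolution m₁ m₂ m₃ x₁ x₂ x₃ v₁ v₂ v₃)
    (h₁₂ : m₁ + m₂ ≠ 0) :
    ∀ t ∈ Ici (0:ℝ), HasDerivWithinAt (fun t => jacobiVec m₁ m₂ (v₁ t) (v₂ t) (v₃ t))
      (((m₁ + m₂ + m₃) / (m₁ + m₂)) •
        (gravAccel m₁ (x₁ t - x₃ t) + gravAccel m₂ (x₂ t - x₃ t))) (Ici 0) t := by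
  intro t ht
  rw [← jacobiVec_eq_smul_of_sum_eq_zero h₁₂ (smul_gravAccel_sum_eq_zero m₁ m₂ m₃ _ _ _)]
  exact (hs.hasDerivWithinAt_v₁ t ht).jacobiVec m₁ m₂ (hs.hasDerivWithinAt_v₂ t ht)
    (hs.hasDerivWithinAt_v₃ t ht)

theorem momentum_eq (hs : IsThreeBodySolution m₁ m₂ m₃ x₁ x₂ x₃ v₁ v₂ v₃) :
    ∀ t ∈ Ici (0:ℝ), m₁ • v₁ t + m₂ • v₂ t + m₃ • v₃ t = m₁ • v₁ 0 + m₂ • v₂ 0 + m₃ • v₃ 0 :=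
  eq_of_hasDerivWithinAt_Ici_zero fun t ht =>
    ((((hs.hasDerivWithinAt_v₁ t ht).const_smul m₁).add
      ((hs.hasDerivWithinAt_v₂ t ht).const_smul m₂)).add
      ((hs.hasDerivWithinAt_v₃ t ht).const_smul m₃)).congr_deriv
      (smul_gravAccel_sum_eq_zero m₁ m₂ m₃ _ _ _)

theorem centerOfMass_eq (hs : IsThreeBodySolution m₁ m₂ m₃ x₁ x₂ x₃ v₁ v₂ v₃) :
    ∀ t ∈ Ici (0:ℝ), m₁ • x₁ t + m₂ • x₂ t + m₃ • x₃ t =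
      m₁ • x₁ 0 + m₂ • x₂ 0 + m₃ • x₃ 0 + t • (m₁ • v₁ 0 + m₂ • v₂ 0 + m₃ • v₃ 0) := by
  intro t ht
  have h := eq_of_hasDerivWithinAt_Ici_zero (fun s hs' =>
    (((((hs.hasDerivWithinAt_x₁ s hs').const_smul m₁).add
      ((hs.hasDerivWithinAt_x₂ s hs').const_smul m₂)).add
      ((hs.hasDerivWithinAt_x₃ s hs').const_smul m₃)).sub
      ((hasDerivWithinAt_id s _).smul_const (m₁ • v₁ 0 + m₂ • v₂ 0 + m₃ • v₃ 0))).congr_deriv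
      (by rw [hs.momentum_eq s hs', one_smul, sub_self])) t ht
  simp only [Pi.sub_apply, Pi.add_apply, Pi.smul_apply, id, zero_smul, sub_zero] at h
  rw [← h, sub_add_cancel]

end IsThreeBodySolution

end ThreeBody

theorem IsThreeBodySolution.exists_norm_cross3_jacobiVec_le {m₁ m₂ m₃ j L T : ℝ}
    {x₁ x₂ x₃ v₁ v₂ v₃ : ℝ → ℝ³} (hs : IsThreeBodySolution m₁ m₂ m₃ x₁ x₂ x₃ v₁ v₂ v₃)
    (hm₁ : 0 < m₁) (hm₂ : 0 < m₂) (hm₃ : 0 < m₃) (hT : 0 ≤ T)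
    (hJ : ∀ t ∈ Ici (0:ℝ), ‖m₁ • cross3 (x₁ t) (v₁ t) + m₂ • cross3 (x₂ t) (v₂ t) +
        m₃ • cross3 (x₃ t) (v₃ t)‖ ≤ j)
    (hpair : ∀ t ≥ T, ‖x₂ t - x₁ t‖ * ‖v₂ t - v₁ t‖ ≤ L) :
    ∃ K, ∀ t ≥ T, ‖cross3 (jacobiVec m₁ m₂ (x₁ t) (x₂ t) (x₃ t))
      (jacobiVec m₁ m₂ (v₁ t) (v₂ t) (v₃ t))‖ ≤ K := by
  set M := m₁ + m₂ + m₃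
  set μ := m₃ * (m₁ + m₂) / M
  set μ₁₂ := m₁ * m₂ / (m₁ + m₂)
  set X : ℝ → ℝ³ := fun t => m₁ • x₁ t + m₂ • x₂ t + m₃ • x₃ t
  set P : ℝ → ℝ³ := fun t => m₁ • v₁ t + m₂ • v₂ t + m₃ • v₃ t
  have hμ : 0 < μ := by positivity
  refine ⟨(j + ‖M⁻¹ • cross3 (X 0) (P 0)‖ + μ₁₂ * L) / μ, fun t ht => ?_⟩
  have ht₀ : t ∈ Ici (0:ℝ) := hT.trans ht
  have hcm : cross3 (X t) (P t) = cross3 (X 0) (P 0) := by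
    simp only [X, P]
    rw [hs.centerOfMass_eq t ht₀, hs.momentum_eq t ht₀, cross3_add_smul_self]
  have hdec := cross3ₗ.jacobi_decomposition (by positivity : m₁ + m₂ ≠ 0) (by positivity : M ≠ 0)
    (x₁ t) (x₂ t) (x₃ t) (v₁ t) (v₂ t) (v₃ t)
  simp only [cross3ₗ_apply] at hdec
  have hξ : μ • cross3 (jacobiVec m₁ m₂ (x₁ t) (x₂ t) (x₃ t))
        (jacobiVec m₁ m₂ (v₁ t) (v₂ t) (v₃ t)) =
      (m₁ • cross3 (x₁ t) (v₁ t) + m₂ • cross3 (x₂ t) (v₂ t) + m₃ • cross3 (x₃ t) (v₃ t)) -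
        M⁻¹ • cross3 (X t) (P t) - μ₁₂ • cross3 (x₂ t - x₁ t) (v₂ t - v₁ t) := by
    rw [hdec]
    abel
  rw [le_div_iff₀' hμ, ← Real.norm_of_nonneg hμ.le, ← norm_smul, hξ, hcm]
  refine (norm_sub_le _ _).trans (add_le_add ((norm_sub_le _ _).trans ?_) ?_)
  · gcongr
    exact hJ t ht₀
  · rw [norm_smul, Real.norm_of_nonneg (by positivity)]
    gcongr
    exact (norm_cross3_le _ _).trans (hpair t ht)

section Escape

variable {E : Type*} [NormedAddCommGroup E] [InnerProductSpace ℝ E]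

theorem radialVelocity_escape {ξ w a : ℝ → E} {T R c K : ℝ} (hc : 0 < c)
    (hξ : ∀ t ≥ T, HasDerivWithinAt ξ (w t) (Ici T) t)
    (hw : ∀ t ≥ T, HasDerivWithinAt w (a t) (Ici T) t)
    (ha : ∀ t ≥ T, R ≤ ‖ξ t‖ → ⟪ξ t, a t⟫ ≤ -(c / ‖ξ t‖))
    (hL : ∀ t ≥ T, ‖ξ t‖ ^ 2 * ‖w t‖ ^ 2 - ⟪ξ t, w t⟫ ^ 2 ≤ K ^ 2)
    (hesc : Tendsto (fun t => ‖ξ t‖) atTop atTop) :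
    ∃ T' ≥ T, (∀ t ≥ T', 0 < ⟪ξ t, w t⟫ / ‖ξ t‖) ∧
      StrictAntiOn (fun t => ⟪ξ t, w t⟫ / ‖ξ t‖) (Ici T') ∧
      ∃ l, 0 ≤ l ∧ Tendsto (fun t => ⟪ξ t, w t⟫ / ‖ξ t‖) atTop (nhds l) := by
  obtain ⟨T₁, hT₁⟩ := (hesc.eventually_ge_atTop (max R (K ^ 2 / c + 1))).exists_forall_of_atTop
  set T' := max T₁ T
  have hsub : Ici T' ⊆ Ici T := Ici_subset_Ici.2 (le_max_right _ _)
  have hfar : ∀ t ≥ T', R ≤ ‖ξ t‖ ∧ K ^ 2 / c + 1 ≤ ‖ξ t‖ := fun t ht =>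
    max_le_iff.1 (hT₁ t (le_of_max_le_left ht))
  have hρ : ∀ t ≥ T', 0 < ‖ξ t‖ := fun t ht => by
    linarith [(hfar t ht).2, div_nonneg (sq_nonneg K) hc.le]
  have hξ' : ∀ t ≥ T', HasDerivWithinAt ξ (w t) (Ici T') t := fun t ht =>
    (hξ t (le_of_max_le_right ht)).mono hsub
  have hν := fun t (ht : t ≥ T') =>
    (hξ' t ht).inner_div_norm ((hw t (le_of_max_le_right ht)).mono hsub) (norm_pos_iff.1 (hρ t ht))
  have hν' : ∀ t > T', (⟪ξ t, a t⟫ * ‖ξ t‖ ^ 2 +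
      (‖ξ t‖ ^ 2 * ‖w t‖ ^ 2 - ⟪ξ t, w t⟫ ^ 2)) / ‖ξ t‖ ^ 3 < 0 := by
    intro t ht
    have hρt := hρ t ht.le
    have hrad : ⟪ξ t, a t⟫ * ‖ξ t‖ ^ 2 ≤ -(c * ‖ξ t‖) :=
      calc _ ≤ -(c / ‖ξ t‖) * ‖ξ t‖ ^ 2 :=
            mul_le_mul_of_nonneg_right (ha t (le_of_max_le_right ht.le) (hfar t ht.le).1)
              (sq_nonneg _)
        _ = -(c * ‖ξ t‖) := by field_simp
    have hfar' : K ^ 2 + c ≤ c * ‖ξ t‖ := by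
      have := mul_le_mul_of_nonneg_left (hfar t ht.le).2 hc.le
      rwa [mul_add, mul_div_cancel₀ _ hc.ne', mul_one] at this
    exact div_neg_of_neg_of_pos (by linarith [hL t (le_of_max_le_right ht.le)]) (by positivity)
  have hanti := strictAntiOn_Ici_of_hasDerivWithinAt_neg hν hν'
  have hpos := pos_of_hasDerivWithinAt_of_antitoneOn
    (fun t ht => (hξ' t ht).norm (norm_pos_iff.1 (hρ t ht))) hanti.antitoneOn hesc
  exact ⟨T', le_max_right _ _, hpos, hanti,
    hanti.antitoneOn.exists_tendsto_atTop_of_nonneg fun t ht => (hpos t ht).le⟩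

end Escape

theorem escape_radial_velocity_limit_general
    (m₁ m₂ m₃ h j : ℝ) (hm₁ : 0 < m₁) (hm₂ : 0 < m₂) (hm₃ : 0 < m₃)
    (hh : 0 < h)
    (x₁ x₂ x₃ v₁ v₂ v₃ : ℝ → EuclideanSpace ℝ (Fin 3))
    -- the long Jacobi vector, its velocity, its length, and the radial velocity ρ̇ = ⟨ξ,ξ̇⟩/ρ
    (ξ ξv : ℝ → EuclideanSpace ℝ (Fin 3)) (ρ ν : ℝ → ℝ)
    (hξ : ∀ t, ξ t = x₃ t - (m₁ + m₂)⁻¹ • (m₁ • x₁ t + m₂ • x₂ t))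
    (hξv : ∀ t, ξv t = v₃ t - (m₁ + m₂)⁻¹ • (m₁ • v₁ t + m₂ • v₂ t))
    (hρ : ∀ t, ρ t = ‖ξ t‖)
    (hν : ∀ t, ν t = ⟪ξ t, ξv t⟫ / ρ t)
    -- collision-free on [0,∞)
    (hsep : ∀ t ∈ Ici (0:ℝ), x₁ t ≠ x₂ t ∧ x₁ t ≠ x₃ t ∧ x₂ t ≠ x₃ t)
    -- velocities are the derivatives of the positions on [0,∞)
    (hx₁ : ∀ t ∈ Ici (0:ℝ), HasDerivWithinAt x₁ (v₁ t) (Ici 0) t)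
    (hx₂ : ∀ t ∈ Ici (0:ℝ), HasDerivWithinAt x₂ (v₂ t) (Ici 0) t)
    (hx₃ : ∀ t ∈ Ici (0:ℝ), HasDerivWithinAt x₃ (v₃ t) (Ici 0) t)
    -- Newton's equations on [0,∞)
    (hN₁ : ∀ t ∈ Ici (0:ℝ), HasDerivWithinAt v₁
      ((m₂ / ‖x₂ t - x₁ t‖ ^ 3) • (x₂ t - x₁ t) +
       (m₃ / ‖x₃ t - x₁ t‖ ^ 3) • (x₃ t - x₁ t)) (Ici 0) t)
    (hN₂ : ∀ t ∈ Ici (0:ℝ), HasDerivWithinAt v₂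
      ((m₁ / ‖x₁ t - x₂ t‖ ^ 3) • (x₁ t - x₂ t) +
       (m₃ / ‖x₃ t - x₂ t‖ ^ 3) • (x₃ t - x₂ t)) (Ici 0) t)
    (hN₃ : ∀ t ∈ Ici (0:ℝ), HasDerivWithinAt v₃
      ((m₁ / ‖x₁ t - x₃ t‖ ^ 3) • (x₁ t - x₃ t) +
       (m₂ / ‖x₂ t - x₃ t‖ ^ 3) • (x₂ t - x₃ t)) (Ici 0) t)
    -- total energy equal to −h
    (hH : ∀ t ∈ Ici (0:ℝ),
      (1 / 2) * (m₁ * ‖v₁ t‖ ^ 2 + m₂ * ‖v₂ t‖ ^ 2 + m₃ * ‖v₃ t‖ ^ 2) -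
        (m₁ * m₂ / ‖x₁ t - x₂ t‖ + m₁ * m₃ / ‖x₁ t - x₃ t‖ +
         m₂ * m₃ / ‖x₂ t - x₃ t‖) = -h)
    -- total angular momentum of norm ≤ j
    (hJ : ∀ t ∈ Ici (0:ℝ),
      ‖m₁ • cross3 (x₁ t) (v₁ t) + m₂ • cross3 (x₂ t) (v₂ t) +
        m₃ • cross3 (x₃ t) (v₃ t)‖ ≤ j)
    -- the pair (1,2) realizes the minimal intermass distance for all large t
    (T₀ : ℝ) (hmin : ∀ t ≥ T₀, 0 ≤ t →
      ‖x₁ t - x₂ t‖ ≤ ‖x₁ t - x₃ t‖ ∧ ‖x₁ t - x₂ t‖ ≤ ‖x₂ t - x₃ t‖)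
    -- escape: ρ(t) → ∞ as t → ∞
    (hesc : Tendsto ρ atTop atTop) :
    ∃ T : ℝ, 0 ≤ T ∧ (∀ t ≥ T, 0 < ν t) ∧ StrictAntiOn ν (Ici T) ∧
      ∃ νinf : ℝ, 0 ≤ νinf ∧ Tendsto ν atTop (nhds νinf) := by
  obtain rfl : ν = fun t => ⟪ξ t, ξv t⟫ / ‖ξ t‖ := funext fun t => by rw [hν, hρ]
  obtain rfl : ρ = fun t => ‖ξ t‖ := funext hρ
  obtain rfl : ξ = fun t => jacobiVec m₁ m₂ (x₁ t) (x₂ t) (x₃ t) := funext hξ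
  obtain rfl : ξv = fun t => jacobiVec m₁ m₂ (v₁ t) (v₂ t) (v₃ t) := funext hξv
  have hs : IsThreeBodySolution m₁ m₂ m₃ x₁ x₂ x₃ v₁ v₂ v₃ := ⟨hx₁, hx₂, hx₃, hN₁, hN₂, hN₃⟩
  set T := max T₀ 0
  have hT : 0 ≤ T := le_max_right _ _
  have hpair := fun t (ht : t ≥ T) => closest_pair_bounds hm₁ hm₂ hm₃.le hh
    (hsep t (hT.trans ht)).1 (hmin t (le_of_max_le_left ht) (hT.trans ht)) (hH t (hT.trans ht))
  obtain ⟨K, hK⟩ := hs.exists_norm_cross3_jacobiVec_le hm₁ hm₂ hm₃ hT hJ fun t ht => (hpair t ht).2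
  obtain ⟨T', hT', hpos, hanti, hlim⟩ := radialVelocity_escape (K := K) (by positivity)
    (fun t ht => (hs.hasDerivWithinAt_jacobiVec_pos t (hT.trans ht)).mono (Ici_subset_Ici.2 hT))
    (fun t ht => (hs.hasDerivWithinAt_jacobiVec_vel (by positivity) t (hT.trans ht)).mono
      (Ici_subset_Ici.2 hT))
    (fun t ht hR => inner_jacobiVec_accel_le hm₁ hm₂ hm₃.le (hpair t ht).1 hR)
    (fun t ht => by rw [← norm_cross3_sq]; exact pow_le_pow_left₀ (norm_nonneg _) (hK t ht) 2)
    hesc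
  exact ⟨T', hT.trans hT', hpos, hanti, hlim⟩

/-- **Escape case.** For a collision-free escape solution (`ρ → ∞`) of the three-body problem
on `[0,∞)` with total energy `−h < 0` and total angular momentum of norm `≤ j`, along which the
pair `(1,2)` realizes the minimal intermass distance for all large times, there is a `T` with
`ρ̇ > 0` on `[T,∞)`, `ρ̇` monotonically decreasing on `[T,∞)`, and `ρ̇(t)` tending to a limit
`ν_∞ ≥ 0` as `t → ∞` (here `ρ̇ = ⟨ξ, ξ̇⟩/ρ`). -/
theorem escape_radial_velocity_limit
    (m₁ m₂ m₃ h j : ℝ) (hm₁ : 0 < m₁) (hm₂ : 0 < m₂) (hm₃ : 0 < m₃)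
    (hh : 0 < h) (hj : 0 ≤ j)
    (x₁ x₂ x₃ v₁ v₂ v₃ : ℝ → EuclideanSpace ℝ (Fin 3))
    -- the long Jacobi vector, its velocity, its length, and the radial velocity ρ̇ = ⟨ξ,ξ̇⟩/ρ
    (ξ ξv : ℝ → EuclideanSpace ℝ (Fin 3)) (ρ ν : ℝ → ℝ)
    (hξ : ∀ t, ξ t = x₃ t - (m₁ + m₂)⁻¹ • (m₁ • x₁ t + m₂ • x₂ t))
    (hξv : ∀ t, ξv t = v₃ t - (m₁ + m₂)⁻¹ • (m₁ • v₁ t + m₂ • v₂ t))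
    (hρ : ∀ t, ρ t = ‖ξ t‖)
    (hν : ∀ t, ν t = ⟪ξ t, ξv t⟫ / ρ t)
    -- collision-free on [0,∞)
    (hsep : ∀ t ∈ Ici (0:ℝ), x₁ t ≠ x₂ t ∧ x₁ t ≠ x₃ t ∧ x₂ t ≠ x₃ t)
    -- velocities are the derivatives of the positions on [0,∞)
    (hx₁ : ∀ t ∈ Ici (0:ℝ), HasDerivWithinAt x₁ (v₁ t) (Ici 0) t)
    (hx₂ : ∀ t ∈ Ici (0:ℝ), HasDerivWithinAt x₂ (v₂ t) (Ici 0) t)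
    (hx₃ : ∀ t ∈ Ici (0:ℝ), HasDerivWithinAt x₃ (v₃ t) (Ici 0) t)
    -- Newton's equations on [0,∞)
    (hN₁ : ∀ t ∈ Ici (0:ℝ), HasDerivWithinAt v₁
      ((m₂ / ‖x₂ t - x₁ t‖ ^ 3) • (x₂ t - x₁ t) +
       (m₃ / ‖x₃ t - x₁ t‖ ^ 3) • (x₃ t - x₁ t)) (Ici 0) t)
    (hN₂ : ∀ t ∈ Ici (0:ℝ), HasDerivWithinAt v₂
      ((m₁ / ‖x₁ t - x₂ t‖ ^ 3) • (x₁ t - x₂ t) +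
       (m₃ / ‖x₃ t - x₂ t‖ ^ 3) • (x₃ t - x₂ t)) (Ici 0) t)
    (hN₃ : ∀ t ∈ Ici (0:ℝ), HasDerivWithinAt v₃
      ((m₁ / ‖x₁ t - x₃ t‖ ^ 3) • (x₁ t - x₃ t) +
       (m₂ / ‖x₂ t - x₃ t‖ ^ 3) • (x₂ t - x₃ t)) (Ici 0) t)
    -- total energy equal to −h
    (hH : ∀ t ∈ Ici (0:ℝ),
      (1 / 2) * (m₁ * ‖v₁ t‖ ^ 2 + m₂ * ‖v₂ t‖ ^ 2 + m₃ * ‖v₃ t‖ ^ 2) -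
        (m₁ * m₂ / ‖x₁ t - x₂ t‖ + m₁ * m₃ / ‖x₁ t - x₃ t‖ +
         m₂ * m₃ / ‖x₂ t - x₃ t‖) = -h)
    -- total angular momentum of norm ≤ j
    (hJ : ∀ t ∈ Ici (0:ℝ),
      ‖m₁ • cross3 (x₁ t) (v₁ t) + m₂ • cross3 (x₂ t) (v₂ t) +
        m₃ • cross3 (x₃ t) (v₃ t)‖ ≤ j)
    -- the pair (1,2) realizes the minimal intermass distance for all large t
    (T₀ : ℝ) (hmin : ∀ t ≥ T₀, 0 ≤ t →
      ‖x₁ t - x₂ t‖ ≤ ‖x₁ t - x₃ t‖ ∧ ‖x₁ t - x₂ t‖ ≤ ‖x₂ t - x₃ t‖)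
    -- escape: ρ(t) → ∞ as t → ∞
    (hesc : Tendsto ρ atTop atTop) :
    ∃ T : ℝ, 0 ≤ T ∧ (∀ t ≥ T, 0 < ν t) ∧ StrictAntiOn ν (Ici T) ∧
      ∃ νinf : ℝ, 0 ≤ νinf ∧ Tendsto ν atTop (nhds νinf) :=
  escape_radial_velocity_limit_general m₁ m₂ m₃ h j hm₁ hm₂ hm₃ hh x₁ x₂ x₃ v₁ v₂ v₃ ξ ξv ρ ν hξ hξv
    hρ hν hsep hx₁ hx₂ hx₃ hN₁ hN₂ hN₃ hH hJ T₀ hmin hesc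
end

section
/- Sturm-type oscillation: let ω₀ > 0, let [a, b] ⊆ ℝ be an interval with b − a ≥ π/ω₀, let ω : [a, b] → ℝ be continuous with ω(σ) ≥ ω₀ for all σ ∈ [a, b], and let z : [a, b] → ℝ be a twice-differentiable solution of z''(σ) = −ω(σ)² z(σ). Then z has a zero in [a, b]. -/
/-!
Compare `z` with `s(σ) = sin (ω₀ (σ - a))`, which solves `s'' = -ω₀² s`, vanishes at `a` and at
`c = a + π/ω₀`, and is nonnegative in between. If `z > 0` on `[a, c]`, the Wronskian
`W = z' s - z s'` has derivative `z s (ω₀² - ω²) ≤ 0` there, so `W c ≤ W a`; but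
`W a = -ω₀ z(a) < 0 < ω₀ z(c) = W c`. Hence `z ≤ 0` somewhere on `[a, c]`, and likewise `-z ≤ 0`
somewhere, so `z` vanishes in between by the intermediate value theorem.
-/

open Set Real

section SturmComparison

variable {ω₀ a : ℝ} {z z' q : ℝ → ℝ}

noncomputable def sturmWronskian (ω₀ a : ℝ) (z z' : ℝ → ℝ) (σ : ℝ) : ℝ :=
  z' σ * sin (ω₀ * (σ - a)) - z σ * (ω₀ * cos (ω₀ * (σ - a)))

theorem sturmWronskian_hasDerivWithinAt {s : Set ℝ} {σ r : ℝ}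
    (hz : HasDerivWithinAt z (z' σ) s σ) (hz' : HasDerivWithinAt z' (-r * z σ) s σ) :
    HasDerivWithinAt (sturmWronskian ω₀ a z z')
      (z σ * sin (ω₀ * (σ - a)) * (ω₀ ^ 2 - r)) s σ := by
  have hlin : HasDerivAt (fun t => ω₀ * (t - a)) ω₀ σ := by
    simpa using ((hasDerivAt_id σ).sub_const a).const_mul ω₀
  have hsin := ((hasDerivAt_sin _).comp σ hlin).hasDerivWithinAt (s := s)
  have hcos := (((hasDerivAt_cos _).comp σ hlin).const_mul ω₀).hasDerivWithinAt (s := s)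
  exact ((hz'.mul hsin).sub (hz.mul hcos)).congr_deriv (by simp only [Function.comp_apply]; ring)

theorem sin_nonneg_of_mem_Icc_add_pi_div (hω₀ : 0 < ω₀) {σ : ℝ}
    (hσ : σ ∈ Icc a (a + π / ω₀)) : 0 ≤ sin (ω₀ * (σ - a)) := by
  apply sin_nonneg_of_nonneg_of_le_pi
  · exact mul_nonneg hω₀.le (sub_nonneg.2 hσ.1)
  · calc ω₀ * (σ - a) ≤ ω₀ * (π / ω₀) := by gcongr; linarith [hσ.2]
      _ = π := by field_simp

theorem sturmWronskian_antitoneOn (hω₀ : 0 < ω₀)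
    (hz : ∀ σ ∈ Icc a (a + π / ω₀), HasDerivWithinAt z (z' σ) (Icc a (a + π / ω₀)) σ)
    (hz' : ∀ σ ∈ Icc a (a + π / ω₀), HasDerivWithinAt z' (-q σ * z σ) (Icc a (a + π / ω₀)) σ)
    (hq : ∀ σ ∈ Icc a (a + π / ω₀), ω₀ ^ 2 ≤ q σ)
    (hz₀ : ∀ σ ∈ Icc a (a + π / ω₀), 0 ≤ z σ) :
    AntitoneOn (sturmWronskian ω₀ a z z') (Icc a (a + π / ω₀)) := by
  have hW : ∀ σ ∈ Icc a (a + π / ω₀), HasDerivWithinAt (sturmWronskian ω₀ a z z')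
      (z σ * sin (ω₀ * (σ - a)) * (ω₀ ^ 2 - q σ)) (Icc a (a + π / ω₀)) σ :=
    fun σ hσ => sturmWronskian_hasDerivWithinAt (hz σ hσ) (hz' σ hσ)
  have hint : interior (Icc a (a + π / ω₀)) ⊆ Icc a (a + π / ω₀) := interior_subset
  refine antitoneOn_of_hasDerivWithinAt_nonpos (convex_Icc _ _)
    (fun σ hσ => (hW σ hσ).continuousWithinAt)
    (fun σ hσ => (hW σ (hint hσ)).mono hint) (fun σ hσ => ?_)
  exact mul_nonpos_of_nonneg_of_nonpos
    (mul_nonneg (hz₀ σ (hint hσ)) (sin_nonneg_of_mem_Icc_add_pi_div hω₀ (hint hσ)))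
    (sub_nonpos.2 (hq σ (hint hσ)))

theorem exists_nonpos_of_sturm_comparison (hω₀ : 0 < ω₀)
    (hz : ∀ σ ∈ Icc a (a + π / ω₀), HasDerivWithinAt z (z' σ) (Icc a (a + π / ω₀)) σ)
    (hz' : ∀ σ ∈ Icc a (a + π / ω₀), HasDerivWithinAt z' (-q σ * z σ) (Icc a (a + π / ω₀)) σ)
    (hq : ∀ σ ∈ Icc a (a + π / ω₀), ω₀ ^ 2 ≤ q σ) :
    ∃ σ ∈ Icc a (a + π / ω₀), z σ ≤ 0 := by
  by_contra! hpos
  have hac : a ≤ a + π / ω₀ := le_add_of_nonneg_right (div_pos pi_pos hω₀).le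
  have hanti := sturmWronskian_antitoneOn hω₀ hz hz' hq fun σ hσ => (hpos σ hσ).le
  have hWle := hanti (left_mem_Icc.2 hac) (right_mem_Icc.2 hac) hac
  have hπ : ω₀ * (a + π / ω₀ - a) = π := by field_simp; ring
  simp only [sturmWronskian, sub_self, mul_zero, sin_zero, cos_zero, hπ, sin_pi, cos_pi] at hWle
  nlinarith [hpos a (left_mem_Icc.2 hac), hpos _ (right_mem_Icc.2 hac)]

end SturmComparison

theorem sturm_oscillation_general
    (a b ω₀ : ℝ) (hω₀ : 0 < ω₀) (hab : Real.pi / ω₀ ≤ b - a)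
    (ω : ℝ → ℝ)
    (hω : ∀ σ ∈ Icc a b, ω₀ ≤ ω σ)
    (z z' : ℝ → ℝ)
    (hz : ∀ σ ∈ Icc a b, HasDerivWithinAt z (z' σ) (Icc a b) σ)
    (hz' : ∀ σ ∈ Icc a b, HasDerivWithinAt z' (-(ω σ) ^ 2 * z σ) (Icc a b) σ) :
    ∃ σ ∈ Icc a b, z σ = 0 := by
  have hsub : Icc a (a + π / ω₀) ⊆ Icc a b := Icc_subset_Icc le_rfl (by linarith)
  have hq : ∀ σ ∈ Icc a (a + π / ω₀), ω₀ ^ 2 ≤ ω σ ^ 2 := fun σ hσ =>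
    pow_le_pow_left₀ hω₀.le (hω σ (hsub hσ)) 2
  obtain ⟨σ₁, hσ₁, hz₁⟩ := exists_nonpos_of_sturm_comparison hω₀
    (fun σ hσ => (hz σ (hsub hσ)).mono hsub) (fun σ hσ => (hz' σ (hsub hσ)).mono hsub) hq
  obtain ⟨σ₂, hσ₂, hz₂⟩ := exists_nonpos_of_sturm_comparison (z := -z) (z' := -z') hω₀
    (fun σ hσ => ((hz σ (hsub hσ)).mono hsub).neg)
    (fun σ hσ => by simpa using ((hz' σ (hsub hσ)).mono hsub).neg) hq
  have hseg : uIcc σ₁ σ₂ ⊆ Icc a b := uIcc_subset_Icc (hsub hσ₁) (hsub hσ₂)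
  have hzero : (0 : ℝ) ∈ uIcc (z σ₁) (z σ₂) :=
    mem_uIcc.2 (Or.inl ⟨hz₁, by simpa using hz₂⟩)
  obtain ⟨σ, hσ, hσ0⟩ := intermediate_value_uIcc
    (fun t ht => (hz t (hseg ht)).continuousWithinAt.mono hseg) hzero
  exact ⟨σ, hseg hσ, hσ0⟩

/-- **Sturm-type oscillation.** If `ω ≥ ω₀ > 0` is continuous on `[a,b]` with
`b − a ≥ π/ω₀`, then every solution of `z'' = −ω² z` on `[a,b]` has a zero in `[a,b]`. -/
theorem sturm_oscillation
    (a b ω₀ : ℝ) (hω₀ : 0 < ω₀) (hab : Real.pi / ω₀ ≤ b - a)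
    (ω : ℝ → ℝ) (hωcont : ContinuousOn ω (Icc a b))
    (hω : ∀ σ ∈ Icc a b, ω₀ ≤ ω σ)
    (z z' : ℝ → ℝ)
    (hz : ∀ σ ∈ Icc a b, HasDerivWithinAt z (z' σ) (Icc a b) σ)
    (hz' : ∀ σ ∈ Icc a b, HasDerivWithinAt z' (-(ω σ) ^ 2 * z σ) (Icc a b) σ) :
    ∃ σ ∈ Icc a b, z σ = 0 :=
  sturm_oscillation_general a b ω₀ hω₀ hab ω hω z z' hz hz'
end

section
/- Bound on the coupling term g: for all masses m₁, m₂, m₃ > 0 there exists C > 0, depending only on the masses, such that for all ξ, ζ ∈ ℝ³ with ξ ≠ 0 and ‖ζ‖ ≤ ‖ξ‖/2, the quantity g := (m₁ + m₂)m₃/‖ξ‖ − m₁m₃/‖ξ − μ₁ζ‖ − m₂m₃/‖ξ + μ₂ζ‖ satisfies |g| ≤ C ‖ζ‖/‖ξ‖². -/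
lemma inv_norm_diff_bound (ξ w : EuclideanSpace ℝ (Fin 3)) (hξ : ξ ≠ 0)
    (hw : ‖w‖ ≤ ‖ξ‖ / 2) :
    |1 / ‖ξ‖ - 1 / ‖ξ + w‖| ≤ 2 * ‖w‖ / ‖ξ‖ ^ 2 := by
  have hξ0 : (0:ℝ) < ‖ξ‖ := norm_pos_iff.mpr hξ
  have hdiff : |‖ξ + w‖ - ‖ξ‖| ≤ ‖w‖ := by
    have := abs_norm_sub_norm_le (ξ + w) ξ
    simpa using this
  have hlow : ‖ξ‖ / 2 ≤ ‖ξ + w‖ := by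
    have h := (abs_le.mp hdiff).1
    linarith
  have hpos : (0:ℝ) < ‖ξ + w‖ := lt_of_lt_of_le (by linarith) hlow
  have heq : 1 / ‖ξ‖ - 1 / ‖ξ + w‖ = (‖ξ + w‖ - ‖ξ‖) / (‖ξ‖ * ‖ξ + w‖) := by
    field_simp
  rw [heq, abs_div, abs_of_pos (by positivity : (0:ℝ) < ‖ξ‖ * ‖ξ + w‖)]
  rw [div_le_div_iff₀ (by positivity) (by positivity)]
  have key : ‖w‖ * (‖ξ‖ * ‖ξ‖) ≤ 2 * ‖w‖ * (‖ξ‖ * ‖ξ + w‖) := by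
    nlinarith [mul_le_mul_of_nonneg_left (show ‖ξ‖ ≤ 2 * ‖ξ + w‖ by linarith)
      (mul_nonneg (norm_nonneg w) hξ0.le)]
  calc |‖ξ + w‖ - ‖ξ‖| * ‖ξ‖ ^ 2 ≤ ‖w‖ * ‖ξ‖ ^ 2 :=
        mul_le_mul_of_nonneg_right hdiff (by positivity)
    _ = ‖w‖ * (‖ξ‖ * ‖ξ‖) := by ring
    _ ≤ 2 * ‖w‖ * (‖ξ‖ * ‖ξ + w‖) := key

/-- **Bound on the coupling term `g`.** With `μ₁ = m₁/(m₁+m₂)`, `μ₂ = m₂/(m₁+m₂)`,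
the error term `g = (m₁+m₂)m₃/‖ξ‖ − m₁m₃/‖ξ − μ₁ζ‖ − m₂m₃/‖ξ + μ₂ζ‖` satisfies
`|g| ≤ C‖ζ‖/‖ξ‖²` whenever `ξ ≠ 0` and `‖ζ‖ ≤ ‖ξ‖/2`, with `C` depending only on
the masses. -/
theorem coupling_term_bound
    (m₁ m₂ m₃ : ℝ) (hm₁ : 0 < m₁) (hm₂ : 0 < m₂) (hm₃ : 0 < m₃) :
    ∃ C > (0:ℝ), ∀ ξ ζ : EuclideanSpace ℝ (Fin 3), ξ ≠ 0 → ‖ζ‖ ≤ ‖ξ‖ / 2 →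
      |(m₁ + m₂) * m₃ / ‖ξ‖ - m₁ * m₃ / ‖ξ - (m₁ / (m₁ + m₂)) • ζ‖ -
          m₂ * m₃ / ‖ξ + (m₂ / (m₁ + m₂)) • ζ‖| ≤ C * ‖ζ‖ / ‖ξ‖ ^ 2 := by
  have hsum : (0:ℝ) < m₁ + m₂ := by linarith
  refine ⟨2 * (m₁ + m₂) * m₃, by positivity, fun ξ ζ hξ hζ => ?_⟩
  have hξ0 : (0:ℝ) < ‖ξ‖ := norm_pos_iff.mpr hξ
  set μ₁ := m₁ / (m₁ + m₂) with hμ₁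
  set μ₂ := m₂ / (m₁ + m₂) with hμ₂
  have hμ₁pos : 0 < μ₁ := by positivity
  have hμ₂pos : 0 < μ₂ := by positivity
  have hμ₁le : μ₁ ≤ 1 := by rw [hμ₁, div_le_one hsum]; linarith
  have hμ₂le : μ₂ ≤ 1 := by rw [hμ₂, div_le_one hsum]; linarith
  have hζnn : (0:ℝ) ≤ ‖ζ‖ := norm_nonneg ζ
  have hw₁ : ‖(-(μ₁ • ζ) : EuclideanSpace ℝ (Fin 3))‖ ≤ ‖ξ‖ / 2 := by
    rw [norm_neg, norm_smul, Real.norm_eq_abs, abs_of_pos hμ₁pos]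
    nlinarith
  have hw₂ : ‖(μ₂ • ζ : EuclideanSpace ℝ (Fin 3))‖ ≤ ‖ξ‖ / 2 := by
    rw [norm_smul, Real.norm_eq_abs, abs_of_pos hμ₂pos]
    nlinarith
  have h₁ := inv_norm_diff_bound ξ (-(μ₁ • ζ)) hξ hw₁
  have h₂ := inv_norm_diff_bound ξ (μ₂ • ζ) hξ hw₂
  have hn₁ : ξ + -(μ₁ • ζ) = ξ - μ₁ • ζ := by abel
  rw [hn₁, norm_neg] at h₁
  have hnorm₁ : ‖μ₁ • ζ‖ = μ₁ * ‖ζ‖ := by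
    rw [norm_smul, Real.norm_eq_abs, abs_of_pos hμ₁pos]
  have hnorm₂ : ‖μ₂ • ζ‖ = μ₂ * ‖ζ‖ := by
    rw [norm_smul, Real.norm_eq_abs, abs_of_pos hμ₂pos]
  rw [hnorm₁] at h₁
  rw [hnorm₂] at h₂
  have hdecomp :
      (m₁ + m₂) * m₃ / ‖ξ‖ - m₁ * m₃ / ‖ξ - μ₁ • ζ‖ - m₂ * m₃ / ‖ξ + μ₂ • ζ‖
        = m₁ * m₃ * (1 / ‖ξ‖ - 1 / ‖ξ - μ₁ • ζ‖)
          + m₂ * m₃ * (1 / ‖ξ‖ - 1 / ‖ξ + μ₂ • ζ‖) := by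
    ring
  rw [hdecomp]
  have hrw :
      m₁ * m₃ * (2 * (μ₁ * ‖ζ‖) / ‖ξ‖ ^ 2) + m₂ * m₃ * (2 * (μ₂ * ‖ζ‖) / ‖ξ‖ ^ 2)
        = (m₁ * m₃ * (2 * (μ₁ * ‖ζ‖)) + m₂ * m₃ * (2 * (μ₂ * ‖ζ‖))) / ‖ξ‖ ^ 2 := by
    ring
  calc |m₁ * m₃ * (1 / ‖ξ‖ - 1 / ‖ξ - μ₁ • ζ‖)
        + m₂ * m₃ * (1 / ‖ξ‖ - 1 / ‖ξ + μ₂ • ζ‖)|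
      ≤ |m₁ * m₃ * (1 / ‖ξ‖ - 1 / ‖ξ - μ₁ • ζ‖)|
        + |m₂ * m₃ * (1 / ‖ξ‖ - 1 / ‖ξ + μ₂ • ζ‖)| := abs_add_le _ _
    _ = m₁ * m₃ * |1 / ‖ξ‖ - 1 / ‖ξ - μ₁ • ζ‖|
        + m₂ * m₃ * |1 / ‖ξ‖ - 1 / ‖ξ + μ₂ • ζ‖| := by
        simp only [abs_mul, abs_of_pos hm₁, abs_of_pos hm₂, abs_of_pos hm₃]
    _ ≤ m₁ * m₃ * (2 * (μ₁ * ‖ζ‖) / ‖ξ‖ ^ 2)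
        + m₂ * m₃ * (2 * (μ₂ * ‖ζ‖) / ‖ξ‖ ^ 2) := by gcongr
    _ = (m₁ * m₃ * (2 * (μ₁ * ‖ζ‖)) + m₂ * m₃ * (2 * (μ₂ * ‖ζ‖))) / ‖ξ‖ ^ 2 := hrw
    _ ≤ 2 * (m₁ + m₂) * m₃ * ‖ζ‖ / ‖ξ‖ ^ 2 := by
        gcongr ?_ / _
        nlinarith [mul_nonneg (mul_nonneg hm₁.le hm₃.le) hζnn,
          mul_nonneg (mul_nonneg hm₂.le hm₃.le) hζnn,
          sub_nonneg.mpr hμ₁le, sub_nonneg.mpr hμ₂le]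
end

section
/- Bound on the ξ-gradient of the coupling term g: for all masses m₁, m₂, m₃ > 0 there exists C > 0, depending only on the masses, such that for all ξ, ζ ∈ ℝ³ with ξ ≠ 0 and ‖ζ‖ ≤ ‖ξ‖/2, the gradient in ξ of g(ξ, ζ) := (m₁ + m₂)m₃/‖ξ‖ − m₁m₃/‖ξ − μ₁ζ‖ − m₂m₃/‖ξ + μ₂ζ‖, namely g_ξ = −(m₁ + m₂)m₃ ξ/‖ξ‖³ + m₁m₃ (ξ − μ₁ζ)/‖ξ − μ₁ζ‖³ + m₂m₃ (ξ + μ₂ζ)/‖ξ + μ₂ζ‖³, satisfies ‖g_ξ‖ ≤ C ‖ζ‖/‖ξ‖³. -/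
/-- Lipschitz-type estimate for the inverse-cube field `v ↦ v/‖v‖³` against a fixed
reference point `w` of norm `R`, for `v` in the annulus `R/2 ≤ ‖v‖ ≤ 3R/2`. -/
lemma inv_cube_field_diff_bound {E : Type*} [NormedAddCommGroup E] [NormedSpace ℝ E]
    (R : ℝ) (hR : 0 < R) (v w : E) (hw : ‖w‖ = R)
    (hv1 : R / 2 ≤ ‖v‖) (hv2 : ‖v‖ ≤ 3 * R / 2) :
    ‖(1 / ‖v‖ ^ 3) • v - (1 / ‖w‖ ^ 3) • w‖ ≤ 46 * ‖v - w‖ / R ^ 3 := by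
  set a := ‖v‖ with ha_def
  set d := ‖v - w‖ with hd_def
  have ha : 0 < a := lt_of_lt_of_le (by linarith) hv1
  have hd0 : 0 ≤ d := norm_nonneg _
  have hdab : |a - R| ≤ d := by
    have := abs_norm_sub_norm_le v w
    rwa [hw] at this
  have heq : (1 / a ^ 3) • v - (1 / ‖w‖ ^ 3) • w
      = (1 / a ^ 3) • (v - w) + (1 / a ^ 3 - 1 / R ^ 3) • w := by
    rw [hw]; module
  have hcube : R ^ 3 / 8 ≤ a ^ 3 := by nlinarith [sq_nonneg (a - R/2), sq_nonneg (a + R/2)]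
  have h1 : 1 / a ^ 3 ≤ 8 / R ^ 3 := by
    calc 1 / a ^ 3 ≤ 1 / (R ^ 3 / 8) :=
          one_div_le_one_div_of_le (by positivity) hcube
      _ = 8 / R ^ 3 := by field_simp
  have h2 : |1 / a ^ 3 - 1 / R ^ 3| ≤ 38 * d / R ^ 4 := by
    have hrw : 1 / a ^ 3 - 1 / R ^ 3 = (R ^ 3 - a ^ 3) / (a ^ 3 * R ^ 3) := by
      field_simp
    rw [hrw, abs_div, abs_of_pos (by positivity : (0:ℝ) < a ^ 3 * R ^ 3)]
    have hnum : |R ^ 3 - a ^ 3| ≤ (19 / 4) * R ^ 2 * d := by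
      have h3 : |R - a| ≤ d := by rwa [abs_sub_comm] at hdab
      have hfac : R ^ 3 - a ^ 3 = (R - a) * (R ^ 2 + R * a + a ^ 2) := by ring
      rw [hfac, abs_mul, abs_of_pos (by positivity : (0:ℝ) < R ^ 2 + R * a + a ^ 2)]
      have hsum : R ^ 2 + R * a + a ^ 2 ≤ (19 / 4) * R ^ 2 := by nlinarith
      calc |R - a| * (R ^ 2 + R * a + a ^ 2) ≤ d * ((19 / 4) * R ^ 2) :=
            mul_le_mul h3 hsum (by positivity) hd0
        _ = (19 / 4) * R ^ 2 * d := by ring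
    calc |R ^ 3 - a ^ 3| / (a ^ 3 * R ^ 3)
        ≤ ((19 / 4) * R ^ 2 * d) / (R ^ 3 / 8 * R ^ 3) := by
          apply div_le_div₀ (by positivity) hnum (by positivity)
          nlinarith [mul_le_mul_of_nonneg_right hcube (pow_pos hR 3).le]
      _ = 38 * d / R ^ 4 := by field_simp; ring
  calc ‖(1 / a ^ 3) • v - (1 / ‖w‖ ^ 3) • w‖
      = ‖(1 / a ^ 3) • (v - w) + (1 / a ^ 3 - 1 / R ^ 3) • w‖ := by rw [heq]
    _ ≤ ‖(1 / a ^ 3) • (v - w)‖ + ‖(1 / a ^ 3 - 1 / R ^ 3) • w‖ := norm_add_le _ _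
    _ = (1 / a ^ 3) * d + |1 / a ^ 3 - 1 / R ^ 3| * R := by
        rw [norm_smul, norm_smul, hw, Real.norm_eq_abs, Real.norm_eq_abs,
          abs_of_pos (by positivity : (0:ℝ) < 1 / a ^ 3)]
    _ ≤ (8 / R ^ 3) * d + (38 * d / R ^ 4) * R :=
        add_le_add (mul_le_mul_of_nonneg_right h1 hd0)
          (mul_le_mul_of_nonneg_right h2 hR.le)
    _ = 46 * d / R ^ 3 := by field_simp; ring

set_option maxHeartbeats 1600000 in
/-- **Bound on the `ξ`-gradient of the coupling term `g`.** With `μ₁ = m₁/(m₁+m₂)`,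
`μ₂ = m₂/(m₁+m₂)`, the gradient in `ξ` of
`g(ξ,ζ) = (m₁+m₂)m₃/‖ξ‖ − m₁m₃/‖ξ − μ₁ζ‖ − m₂m₃/‖ξ + μ₂ζ‖`, namely
`g_ξ = −(m₁+m₂)m₃ ξ/‖ξ‖³ + m₁m₃(ξ − μ₁ζ)/‖ξ − μ₁ζ‖³ + m₂m₃(ξ + μ₂ζ)/‖ξ + μ₂ζ‖³`,
satisfies `‖g_ξ‖ ≤ C‖ζ‖/‖ξ‖³` whenever `ξ ≠ 0` and `‖ζ‖ ≤ ‖ξ‖/2`, with `C` depending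
only on the masses. -/
theorem coupling_term_gradient_bound
    (m₁ m₂ m₃ : ℝ) (hm₁ : 0 < m₁) (hm₂ : 0 < m₂) (hm₃ : 0 < m₃) :
    ∃ C > (0:ℝ), ∀ ξ ζ : EuclideanSpace ℝ (Fin 3), ξ ≠ 0 → ‖ζ‖ ≤ ‖ξ‖ / 2 →
      ‖(-((m₁ + m₂) * m₃ / ‖ξ‖ ^ 3)) • ξ +
          (m₁ * m₃ / ‖ξ - (m₁ / (m₁ + m₂)) • ζ‖ ^ 3) • (ξ - (m₁ / (m₁ + m₂)) • ζ) +
          (m₂ * m₃ / ‖ξ + (m₂ / (m₁ + m₂)) • ζ‖ ^ 3) • (ξ + (m₂ / (m₁ + m₂)) • ζ)‖ ≤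
        C * ‖ζ‖ / ‖ξ‖ ^ 3 := by
  have hm₁₂ : 0 < m₁ + m₂ := by linarith
  set μ₁ := m₁ / (m₁ + m₂) with hμ₁
  set μ₂ := m₂ / (m₁ + m₂) with hμ₂
  have hμ₁0 : 0 < μ₁ := by positivity
  have hμ₂0 : 0 < μ₂ := by positivity
  have hμ₁1 : μ₁ ≤ 1 := by rw [hμ₁, div_le_one hm₁₂]; linarith
  have hμ₂1 : μ₂ ≤ 1 := by rw [hμ₂, div_le_one hm₁₂]; linarith
  refine ⟨46 * (m₁ + m₂) * m₃, by positivity, fun ξ ζ hξ hζ => ?_⟩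
  set R := ‖ξ‖ with hR_def
  have hR : 0 < R := norm_pos_iff.mpr hξ
  have hζ0 : 0 ≤ ‖ζ‖ := norm_nonneg _
  -- norm bounds for the shifted points
  have hμζ₁ : ‖(μ₁ : ℝ) • ζ‖ ≤ R / 2 := by
    rw [norm_smul, Real.norm_eq_abs, abs_of_pos hμ₁0]
    calc μ₁ * ‖ζ‖ ≤ 1 * ‖ζ‖ := mul_le_mul_of_nonneg_right hμ₁1 hζ0
      _ = ‖ζ‖ := one_mul _
      _ ≤ R / 2 := hζ
  have hμζ₂ : ‖(μ₂ : ℝ) • ζ‖ ≤ R / 2 := by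
    rw [norm_smul, Real.norm_eq_abs, abs_of_pos hμ₂0]
    calc μ₂ * ‖ζ‖ ≤ 1 * ‖ζ‖ := mul_le_mul_of_nonneg_right hμ₂1 hζ0
      _ = ‖ζ‖ := one_mul _
      _ ≤ R / 2 := hζ
  set u₁ := ξ - μ₁ • ζ with hu₁
  set u₂ := ξ + μ₂ • ζ with hu₂
  have hu₁lo : R / 2 ≤ ‖u₁‖ := by
    have := norm_sub_norm_le ξ (μ₁ • ζ)
    calc R / 2 = R - R / 2 := by ring
      _ ≤ ‖ξ‖ - ‖μ₁ • ζ‖ := by linarith [hμζ₁]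
      _ ≤ ‖u₁‖ := this
  have hu₁hi : ‖u₁‖ ≤ 3 * R / 2 := by
    calc ‖u₁‖ ≤ ‖ξ‖ + ‖μ₁ • ζ‖ := norm_sub_le _ _
      _ ≤ R + R / 2 := by linarith [hμζ₁]
      _ = 3 * R / 2 := by ring
  have hu₂lo : R / 2 ≤ ‖u₂‖ := by
    have := norm_sub_norm_le ξ (-(μ₂ • ζ))
    rw [sub_neg_eq_add, norm_neg] at this
    calc R / 2 = R - R / 2 := by ring
      _ ≤ ‖ξ‖ - ‖μ₂ • ζ‖ := by linarith [hμζ₂]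
      _ ≤ ‖u₂‖ := this
  have hu₂hi : ‖u₂‖ ≤ 3 * R / 2 := by
    calc ‖u₂‖ ≤ ‖ξ‖ + ‖μ₂ • ζ‖ := norm_add_le _ _
      _ ≤ R + R / 2 := by linarith [hμζ₂]
      _ = 3 * R / 2 := by ring
  -- the key pointwise estimates
  have key₁ := inv_cube_field_diff_bound R hR u₁ ξ rfl hu₁lo hu₁hi
  have key₂ := inv_cube_field_diff_bound R hR u₂ ξ rfl hu₂lo hu₂hi
  have hd₁ : ‖u₁ - ξ‖ = μ₁ * ‖ζ‖ := by
    rw [hu₁, sub_sub_cancel_left, norm_neg, norm_smul, Real.norm_eq_abs, abs_of_pos hμ₁0]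
  have hd₂ : ‖u₂ - ξ‖ = μ₂ * ‖ζ‖ := by
    rw [hu₂, add_sub_cancel_left, norm_smul, Real.norm_eq_abs, abs_of_pos hμ₂0]
  -- decompose the gradient
  have hsplit : (-((m₁ + m₂) * m₃ / R ^ 3)) • ξ + (m₁ * m₃ / ‖u₁‖ ^ 3) • u₁ +
      (m₂ * m₃ / ‖u₂‖ ^ 3) • u₂
      = (m₁ * m₃) • ((1 / ‖u₁‖ ^ 3) • u₁ - (1 / ‖ξ‖ ^ 3) • ξ) +
        (m₂ * m₃) • ((1 / ‖u₂‖ ^ 3) • u₂ - (1 / ‖ξ‖ ^ 3) • ξ) := by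
    rw [← hR_def]; module
  rw [hsplit]
  have hb₁ : ‖(m₁ * m₃) • ((1 / ‖u₁‖ ^ 3) • u₁ - (1 / ‖ξ‖ ^ 3) • ξ)‖
      ≤ m₁ * m₃ * (46 * (μ₁ * ‖ζ‖) / R ^ 3) := by
    rw [norm_smul, Real.norm_eq_abs, abs_of_pos (by positivity : (0:ℝ) < m₁ * m₃)]
    apply mul_le_mul_of_nonneg_left _ (by positivity)
    rw [← hd₁]; exact key₁
  have hb₂ : ‖(m₂ * m₃) • ((1 / ‖u₂‖ ^ 3) • u₂ - (1 / ‖ξ‖ ^ 3) • ξ)‖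
      ≤ m₂ * m₃ * (46 * (μ₂ * ‖ζ‖) / R ^ 3) := by
    rw [norm_smul, Real.norm_eq_abs, abs_of_pos (by positivity : (0:ℝ) < m₂ * m₃)]
    apply mul_le_mul_of_nonneg_left _ (by positivity)
    rw [← hd₂]; exact key₂
  calc ‖(m₁ * m₃) • ((1 / ‖u₁‖ ^ 3) • u₁ - (1 / ‖ξ‖ ^ 3) • ξ) +
        (m₂ * m₃) • ((1 / ‖u₂‖ ^ 3) • u₂ - (1 / ‖ξ‖ ^ 3) • ξ)‖
      ≤ ‖(m₁ * m₃) • ((1 / ‖u₁‖ ^ 3) • u₁ - (1 / ‖ξ‖ ^ 3) • ξ)‖ +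
        ‖(m₂ * m₃) • ((1 / ‖u₂‖ ^ 3) • u₂ - (1 / ‖ξ‖ ^ 3) • ξ)‖ := norm_add_le _ _
    _ ≤ m₁ * m₃ * (46 * (μ₁ * ‖ζ‖) / R ^ 3) + m₂ * m₃ * (46 * (μ₂ * ‖ζ‖) / R ^ 3) :=
        add_le_add hb₁ hb₂
    _ = (m₁ * m₃ * 46 * μ₁ + m₂ * m₃ * 46 * μ₂) * ‖ζ‖ / R ^ 3 := by ring
    _ ≤ 46 * (m₁ + m₂) * m₃ * ‖ζ‖ / R ^ 3 := by
        have hnum : (m₁ * m₃ * 46 * μ₁ + m₂ * m₃ * 46 * μ₂) * ‖ζ‖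
            ≤ 46 * (m₁ + m₂) * m₃ * ‖ζ‖ := by
          have e1 : m₁ * m₃ * 46 * μ₁ ≤ m₁ * m₃ * 46 * 1 :=
            mul_le_mul_of_nonneg_left hμ₁1 (by positivity)
          have e2 : m₂ * m₃ * 46 * μ₂ ≤ m₂ * m₃ * 46 * 1 :=
            mul_le_mul_of_nonneg_left hμ₂1 (by positivity)
          have := mul_le_mul_of_nonneg_right (add_le_add e1 e2) hζ0
          nlinarith [this]
        rw [div_le_div_iff₀ (by positivity) (by positivity)]
        nlinarith [mul_le_mul_of_nonneg_right hnum (pow_pos hR 3).le]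
end
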